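/- arXiv:2011.03959 — 13 statements merged into one kernel-verified Lean document; each statement's English description precedes it below -/
import Mathlib

section
/- Every degree-4 scalar polynomial ODE ẋ = q₄x⁴ + q₃x³ + q₂x² + q₁x + q₀ with q₄ ≠ 0 can be quadratized with exactly one new variable: after the change of variables x = y − q₃/(4q₄), the ODE takes the form ẏ = q₄y⁴ + p₂y² + p₁y + p₀, and z := y³ quadratizes it via ẏ = q₄zy + p₂y² + p₁y + p₀ and ż = 3q₄z² + 3p₂zy + 3p₁z + 3p₀y². -/
open Polynomial

/-- `z₁, ..., z_m ∈ ℂ[x]` quadratize the scalar ODE `ẋ = p(x)` if there exist polynomials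
`h₁, ..., h_{m+1}` in `x, z₁, ..., z_m` of total degree at most 2 such that
`p = h₁(x, z₁(x), ..., z_m(x))` and `z_i'(x)·p(x) = h_{i+1}(x, z₁(x), ..., z_m(x))`. -/
def Quadratizes {m : ℕ} (p : Polynomial ℂ) (z : Fin m → Polynomial ℂ) : Prop :=
  ∃ h : Fin (m + 1) → MvPolynomial (Fin (m + 1)) ℂ,
    (∀ i, (h i).totalDegree ≤ 2) ∧
    (MvPolynomial.aeval (Fin.cons X z) (h 0) = p) ∧
    ∀ i : Fin m, MvPolynomial.aeval (Fin.cons X z) (h i.succ) = derivative (z i) * p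

lemma quad_aux (q₄ p₂ p₁ p₀ : ℂ) :
    Quadratizes (C q₄ * X ^ 4 + C p₂ * X ^ 2 + C p₁ * X + C p₀) ![X ^ 3] := by
  have tC : ∀ a : ℂ, (MvPolynomial.C a : MvPolynomial (Fin 2) ℂ).totalDegree ≤ 2 := by
    intro a; simp [MvPolynomial.totalDegree_C]
  have tCX : ∀ (a : ℂ) (i : Fin 2), (MvPolynomial.C a * MvPolynomial.X i).totalDegree ≤ 2 := by
    intro a i
    calc (MvPolynomial.C a * MvPolynomial.X i).totalDegree
        ≤ (MvPolynomial.C a).totalDegree + (MvPolynomial.X i).totalDegree :=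
          MvPolynomial.totalDegree_mul _ _
      _ ≤ 2 := by simp [MvPolynomial.totalDegree_C, MvPolynomial.totalDegree_X]
  have tCXX : ∀ (a : ℂ) (i j : Fin 2),
      (MvPolynomial.C a * MvPolynomial.X i * MvPolynomial.X j).totalDegree ≤ 2 := by
    intro a i j
    calc (MvPolynomial.C a * MvPolynomial.X i * MvPolynomial.X j).totalDegree
        ≤ (MvPolynomial.C a * MvPolynomial.X i).totalDegree
            + (MvPolynomial.X j).totalDegree := MvPolynomial.totalDegree_mul _ _
      _ ≤ _ := by
          have := MvPolynomial.totalDegree_mul (MvPolynomial.C a) (MvPolynomial.X i (R := ℂ))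
          simp [MvPolynomial.totalDegree_C, MvPolynomial.totalDegree_X] at this ⊢
          omega
  have tCX2 : ∀ (a : ℂ) (i : Fin 2),
      (MvPolynomial.C a * MvPolynomial.X i ^ 2).totalDegree ≤ 2 := by
    intro a i
    calc (MvPolynomial.C a * MvPolynomial.X i ^ 2).totalDegree
        ≤ (MvPolynomial.C a).totalDegree + (MvPolynomial.X i ^ 2).totalDegree :=
          MvPolynomial.totalDegree_mul _ _
      _ ≤ 0 + 2 * 1 := by
          gcongr
          · simp [MvPolynomial.totalDegree_C]
          · exact le_trans (MvPolynomial.totalDegree_pow _ _)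
              (by simp [MvPolynomial.totalDegree_X])
      _ ≤ 2 := by norm_num
  have hcons : (Fin.cons X ![X ^ 3] : Fin 2 → Polynomial ℂ) = ![X, X ^ 3] := rfl
  refine ⟨![MvPolynomial.C q₄ * MvPolynomial.X 1 * MvPolynomial.X 0
      + MvPolynomial.C p₂ * MvPolynomial.X 0 ^ 2
      + MvPolynomial.C p₁ * MvPolynomial.X 0 + MvPolynomial.C p₀,
    MvPolynomial.C (3 * q₄) * MvPolynomial.X 1 ^ 2
      + MvPolynomial.C (3 * p₂) * MvPolynomial.X 1 * MvPolynomial.X 0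
      + MvPolynomial.C (3 * p₁) * MvPolynomial.X 1
      + MvPolynomial.C (3 * p₀) * MvPolynomial.X 0 ^ 2], ?_, ?_, ?_⟩
  · intro i
    fin_cases i <;>
      simp only [Matrix.cons_val_zero, Matrix.cons_val_one, Matrix.head_cons] <;>
      refine le_trans (MvPolynomial.totalDegree_add _ _) (max_le
        (le_trans (MvPolynomial.totalDegree_add _ _) (max_le
          (le_trans (MvPolynomial.totalDegree_add _ _) (max_le ?_ ?_)) ?_)) ?_)
    exacts [tCXX q₄ 1 0, tCX2 p₂ 0, tCX p₁ 0, tC p₀,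
      tCX2 (3*q₄) 1, tCXX (3*p₂) 1 0, tCX (3*p₁) 1, tCX2 (3*p₀) 0]
  · rw [hcons]
    simp [Polynomial.algebraMap_eq]
    ring
  · intro i
    fin_cases i
    rw [hcons]
    simp [Polynomial.algebraMap_eq, derivative_X_pow]
    simp only [map_ofNat]
    ring

theorem stmt3 (q₄ q₃ q₂ q₁ q₀ : ℂ) (h4 : q₄ ≠ 0) :
    ∃ p₂ p₁ p₀ : ℂ,
      (C q₄ * X ^ 4 + C q₃ * X ^ 3 + C q₂ * X ^ 2 + C q₁ * X + C q₀).comp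
          (X - C (q₃ / (4 * q₄))) =
        C q₄ * X ^ 4 + C p₂ * X ^ 2 + C p₁ * X + C p₀ ∧
      Quadratizes (C q₄ * X ^ 4 + C p₂ * X ^ 2 + C p₁ * X + C p₀) ![X ^ 3] ∧
      C q₄ * X ^ 4 + C p₂ * X ^ 2 + C p₁ * X + C p₀ =
        C q₄ * X ^ 3 * X + C p₂ * X ^ 2 + C p₁ * X + C p₀ ∧
      derivative ((X : Polynomial ℂ) ^ 3) *
          (C q₄ * X ^ 4 + C p₂ * X ^ 2 + C p₁ * X + C p₀) =
        C (3 * q₄) * (X ^ 3) ^ 2 + C (3 * p₂) * (X ^ 3) * X + C (3 * p₁) * X ^ 3 +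
          C (3 * p₀) * X ^ 2 := by
  set a := q₃ / (4 * q₄) with ha
  refine ⟨6*q₄*a^2 - 3*q₃*a + q₂, -(4*q₄*a^3) + 3*q₃*a^2 - 2*q₂*a + q₁,
    q₄*a^4 - q₃*a^3 + q₂*a^2 - q₁*a + q₀, ?_, quad_aux _ _ _ _, by ring, ?_⟩
  · have hq3 : q₃ = 4 * q₄ * a := by rw [ha]; field_simp
    simp only [add_comp, mul_comp, C_comp, X_comp, pow_comp, sub_comp]
    rw [hq3]
    simp only [map_mul, map_add, map_sub, map_pow, map_neg, map_ofNat]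
    ring
  · simp only [derivative_X_pow, Nat.cast_ofNat, map_mul, map_add, map_sub, map_pow, map_neg,
      map_ofNat]
    ring
end

section
/- Let n ≥ 5 and a, b, aₙ ∈ ℂ with aₙ ≠ 0. The scalar ODE ẋ = aₙxⁿ + ax² + bx is quadratized by the single new variable z := x^{n-1}: aₙxⁿ + ax² + bx = aₙzx + ax² + bx, and (n-1)x^{n-2}·(aₙxⁿ + ax² + bx) = (n-1)(aₙz² + azx + bz). -/
open Polynomial

theorem stmt5 (n : ℕ) (hn : 5 ≤ n) (an a b : ℂ) (han : an ≠ 0) :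
    Quadratizes (C an * X ^ n + C a * X ^ 2 + C b * X) ![X ^ (n - 1)] ∧
    (C an * X ^ n + C a * X ^ 2 + C b * X : Polynomial ℂ) =
      C an * X ^ (n - 1) * X + C a * X ^ 2 + C b * X ∧
    C ((n : ℂ) - 1) * X ^ (n - 2) * (C an * X ^ n + C a * X ^ 2 + C b * X : Polynomial ℂ) =
      C ((n : ℂ) - 1) * (C an * (X ^ (n - 1)) ^ 2 + C a * (X ^ (n - 1) * X) + C b * X ^ (n - 1)) := by
  obtain ⟨k, rfl⟩ : ∃ k, n = k + 5 := ⟨n - 5, by omega⟩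
  have h1 : k + 5 - 1 = k + 4 := by omega
  have h2 : k + 5 - 2 = k + 3 := by omega
  rw [h1, h2]
  refine ⟨?_, by ring, by push_cast; ring⟩
  refine ⟨![MvPolynomial.C an * (MvPolynomial.X 0 * MvPolynomial.X 1) +
      MvPolynomial.C a * MvPolynomial.X 0 ^ 2 + MvPolynomial.C b * MvPolynomial.X 0,
    MvPolynomial.C (an * (k + 4)) * MvPolynomial.X 1 ^ 2 +
      MvPolynomial.C (a * (k + 4)) * (MvPolynomial.X 1 * MvPolynomial.X 0) +
      MvPolynomial.C (b * (k + 4)) * MvPolynomial.X 1], ?_, ?_, ?_⟩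
  · have hC : ∀ (c : ℂ) (q : MvPolynomial (Fin 2) ℂ), q.totalDegree ≤ 2 →
        (MvPolynomial.C c * q).totalDegree ≤ 2 := fun c q h =>
      le_trans (MvPolynomial.totalDegree_mul _ _) (by simpa using h)
    have hXX : ∀ i j : Fin 2, (MvPolynomial.X (R := ℂ) i * MvPolynomial.X j).totalDegree ≤ 2 :=
      fun i j => le_trans (MvPolynomial.totalDegree_mul _ _)
        (by simp [MvPolynomial.totalDegree_X])
    intro i
    fin_cases i <;>
    · refine le_trans (MvPolynomial.totalDegree_add _ _) ?_
      refine max_le (le_trans (MvPolynomial.totalDegree_add _ _) (max_le ?_ ?_)) ?_ <;>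
      · first
        | with_reducible exact hC _ _ (hXX _ _)
        | exact hC _ _ (by simpa using (MvPolynomial.totalDegree_X_pow (R := ℂ) _ _).le)
        | exact hC _ _ (by simp [MvPolynomial.totalDegree_X])
  all_goals
    have hfun : (Fin.cons X ![X ^ (k + 4)] : Fin 2 → Polynomial ℂ) = ![X, X ^ (k + 4)] := by
      funext i; fin_cases i <;> rfl
  · rw [hfun]
    simp only [Matrix.cons_val_zero, Matrix.cons_val_one, Matrix.head_cons, map_add, map_mul,
      map_pow, MvPolynomial.aeval_X, MvPolynomial.aeval_C, MvPolynomial.algebraMap_eq,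
      Polynomial.algebraMap_eq]
    ring
  · intro i
    have hi : i = 0 := Subsingleton.elim i 0
    subst hi
    rw [hfun]
    simp only [Fin.isValue, Fin.succ_zero_eq_one, Matrix.cons_val_one, Matrix.head_cons,
      Matrix.cons_val_zero, map_add, map_mul, map_pow, MvPolynomial.aeval_X, MvPolynomial.aeval_C,
      MvPolynomial.algebraMap_eq, Polynomial.algebraMap_eq, derivative_X_pow]
    push_cast
    simp only [C_add, C_mul]
    ring
end

section
/- Let n ≥ 5 and suppose the scalar ODE ẋ = aₙxⁿ + q(x), with aₙ ≠ 0 and deg q ≤ n−1, is quadratized by a single new variable z = z(x) ∈ ℂ[x]. Then deg z = n − 1. -/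
open Polynomial

lemma decomp (h : MvPolynomial (Fin 2) ℂ) (hh : h.totalDegree ≤ 2) (z : Polynomial ℂ) :
    ∃ a b c d e f : ℂ, MvPolynomial.aeval (Fin.cons X ![z]) h =
      C a + C b * X + C c * z + C d * X ^ 2 + C e * (X * z) + C f * z ^ 2 := by
  set P : Polynomial ℂ → Prop := fun w => ∃ a b c d e f : ℂ,
    w = C a + C b * X + C c * z + C d * X ^ 2 + C e * (X * z) + C f * z ^ 2 with hP
  suffices hs : P (MvPolynomial.aeval (Fin.cons X ![z]) h) by exact hs
  conv => rw [MvPolynomial.as_sum h]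
  rw [map_sum]
  apply Finset.sum_induction
  · rintro w1 w2 ⟨a1,b1,c1,d1,e1,f1,rfl⟩ ⟨a2,b2,c2,d2,e2,f2,rfl⟩
    exact ⟨a1+a2,b1+b2,c1+c2,d1+d2,e1+e2,f1+f2, by simp [C_add]; ring⟩
  · exact ⟨0,0,0,0,0,0, by simp⟩
  · intro m hm
    have hdeg : m 0 + m 1 ≤ 2 := by
      have := MvPolynomial.le_totalDegree hm
      rw [Finsupp.sum_fintype] at this
      · simpa [Fin.sum_univ_two] using this.trans hh
      · simp
    have haev : MvPolynomial.aeval (Fin.cons X ![z]) (MvPolynomial.monomial m (h.coeff m))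
        = C (h.coeff m) * X ^ (m 0) * z ^ (m 1) := by
      rw [MvPolynomial.aeval_monomial, Finsupp.prod_pow]
      simp [Fin.prod_univ_two, mul_assoc]
      try rfl
    rw [haev]
    set c := h.coeff m with hc
    have hcases : (m 0 = 0 ∧ m 1 = 0) ∨ (m 0 = 1 ∧ m 1 = 0) ∨ (m 0 = 0 ∧ m 1 = 1) ∨
        (m 0 = 2 ∧ m 1 = 0) ∨ (m 0 = 1 ∧ m 1 = 1) ∨ (m 0 = 0 ∧ m 1 = 2) := by omega
    rcases hcases with ⟨h0,h1⟩|⟨h0,h1⟩|⟨h0,h1⟩|⟨h0,h1⟩|⟨h0,h1⟩|⟨h0,h1⟩ <;> rw [h0, h1]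
    · exact ⟨c,0,0,0,0,0, by simp⟩
    · exact ⟨0,c,0,0,0,0, by simp⟩
    · exact ⟨0,0,c,0,0,0, by simp⟩
    · exact ⟨0,0,0,c,0,0, by simp⟩
    · exact ⟨0,0,0,0,c,0, by simp; ring⟩
    · exact ⟨0,0,0,0,0,c, by simp⟩

lemma coeff_key (z : Polynomial ℂ) (a b c d2 e f : ℂ) (k : ℕ) (hk : 3 ≤ k) :
    (C a + C b * X + C c * z + C d2 * X ^ 2 + C e * (X * z) + C f * z ^ 2).coeff k
      = c * z.coeff k + e * z.coeff (k-1) + f * (z^2).coeff k := by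
  obtain ⟨k, rfl⟩ : ∃ k', k = k' + 1 := ⟨k-1, by omega⟩
  have h1 : k + 1 ≠ 1 := by omega
  have h2 : k + 1 ≠ 2 := by omega
  simp [coeff_add, coeff_C_mul, coeff_C, coeff_X, coeff_X_pow, coeff_X_mul, h1, h2,
    Ne.symm h1, Ne.symm h2, show k ≠ 0 by omega, show k ≠ 1 by omega]

theorem stmt6 (n : ℕ) (hn : 5 ≤ n) (an : ℂ) (han : an ≠ 0) (q : Polynomial ℂ)
    (hq : q.degree ≤ (n - 1 : ℕ)) (z : Polynomial ℂ)
    (hquad : Quadratizes (C an * X ^ n + q) ![z]) :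
    z.natDegree = n - 1 := by
  obtain ⟨h, hdeg2, heq1, heq2⟩ := hquad
  set p : Polynomial ℂ := C an * X ^ n + q with hp
  have heq2' : MvPolynomial.aeval (Fin.cons X ![z]) (h ((0 : Fin 1).succ))
      = derivative z * p := by simpa using heq2 0
  obtain ⟨a, b, c, d2, e, f, hd1⟩ := decomp (h 0) (hdeg2 0) z
  obtain ⟨a', b', c', d2', e', f', hd2⟩ := decomp (h ((0 : Fin 1).succ)) (hdeg2 _) z
  have E1 : C a + C b * X + C c * z + C d2 * X ^ 2 + C e * (X * z) + C f * z ^ 2 = p :=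
    hd1.symm.trans heq1
  have E2 : C a' + C b' * X + C c' * z + C d2' * X ^ 2 + C e' * (X * z) + C f' * z ^ 2
      = derivative z * p := hd2.symm.trans heq2'
  set d := z.natDegree with hd
  set lc := z.leadingCoeff with hlc
  -- facts about p
  have hqn : q.natDegree ≤ n - 1 := natDegree_le_iff_degree_le.mpr hq
  have hpcoeff : ∀ k, n ≤ k → p.coeff k = if k = n then an else 0 := by
    intro k hk
    have hqk : q.coeff k = 0 := coeff_eq_zero_of_natDegree_lt (by omega)
    simp [hp, coeff_add, coeff_C_mul, coeff_X_pow, hqk, eq_comm]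
  have hpcn : p.coeff n = an := by rw [hpcoeff n le_rfl]; simp
  have hpn : p.natDegree = n := by
    refine le_antisymm ((natDegree_add_le _ _).trans ?_) (le_natDegree_of_ne_zero (by rw [hpcn]; exact han))
    have h1 : (C an * X ^ n).natDegree ≤ n := (natDegree_C_mul_le an _).trans (by simp)
    exact max_le h1 (by omega)
  have hplc : p.leadingCoeff = an := by rw [leadingCoeff, hpn, hpcn]
  -- z coefficient facts
  have hzc : ∀ j, d < j → z.coeff j = 0 := fun j hj => coeff_eq_zero_of_natDegree_lt hj
  have hz2c : ∀ j, 2 * d < j → (z ^ 2).coeff j = 0 := fun j hj =>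
    coeff_eq_zero_of_natDegree_lt (lt_of_le_of_lt (natDegree_pow_le.trans (by omega)) hj)
  by_contra hne
  rcases Nat.eq_zero_or_pos d with hd0 | hd1
  · -- d = 0 : RHS of E1 has coeff 0 at n, but p.coeff n = an ≠ 0
    have := congrArg (fun w => w.coeff n) E1
    beta_reduce at this
    rw [coeff_key z a b c d2 e f n (by omega), hpcn] at this
    rw [hzc n (by omega), hzc (n-1) (by omega), hz2c n (by omega)] at this
    simp at this
    exact han this.symm
  · -- d ≥ 1
    have hz0 : z ≠ 0 := fun h0 => by simp [h0] at hd; omega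
    have hlcne : lc ≠ 0 := leadingCoeff_ne_zero.mpr hz0
    have hz'c : (derivative z).coeff (d - 1) = lc * d := by
      rw [coeff_derivative, show d - 1 + 1 = d by omega]
      have h1 : z.coeff d = lc := rfl
      have h2 : ((d - 1 : ℕ) : ℂ) + 1 = (d : ℂ) := by
        exact_mod_cast congrArg (Nat.cast : ℕ → ℂ) (by omega : d - 1 + 1 = d)
      rw [h1, h2]
    have hz'ne : (derivative z).coeff (d - 1) ≠ 0 := by
      rw [hz'c]
      exact mul_ne_zero hlcne (Nat.cast_ne_zero.mpr (by omega))
    have hz'd : (derivative z).natDegree = d - 1 :=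
      le_antisymm (natDegree_derivative_le z) (le_natDegree_of_ne_zero hz'ne)
    have hLHStop : (derivative z * p).coeff (d - 1 + n) = lc * d * an := by
      have h1 := coeff_mul_degree_add_degree (derivative z) p
      rw [hz'd, hpn] at h1
      rw [h1, hplc, Polynomial.leadingCoeff, hz'd, hz'c]
    have hfz2 : f' * (z ^ 2).coeff (d - 1 + n) = 0 := by
      rcases lt_or_gt_of_ne hne with hlt | hgt
      · rw [hz2c (d - 1 + n) (by omega)]; ring
      · -- d ≥ n : show f' = 0 using coeff at 2*d of E2
        have hdn : n ≤ d := by omega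
        have hz2top : (z ^ 2).coeff (2 * d) = lc * lc := by
          rw [sq, two_mul, coeff_mul_degree_add_degree]
        have hLHS0 : (derivative z * p).coeff (2 * d) = 0 := by
          apply coeff_eq_zero_of_natDegree_lt
          calc (derivative z * p).natDegree ≤ (derivative z).natDegree + p.natDegree :=
                natDegree_mul_le
            _ = d - 1 + n := by rw [hz'd, hpn]
            _ < 2 * d := by omega
        have := congrArg (fun w => w.coeff (2 * d)) E2
        beta_reduce at this
        rw [coeff_key z a' b' c' d2' e' f' (2 * d) (by omega), hLHS0] at this
        rw [hzc (2 * d) (by omega), hzc (2 * d - 1) (by omega), hz2top] at this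
        simp at this
        rcases this with h0 | h0
        · rw [h0]; ring
        · exact absurd h0 hlcne
    have := congrArg (fun w => w.coeff (d - 1 + n)) E2
    beta_reduce at this
    rw [coeff_key z a' b' c' d2' e' f' (d - 1 + n) (by omega), hLHStop] at this
    rw [hzc (d - 1 + n) (by omega), hzc (d - 1 + n - 1) (by omega), hfz2] at this
    simp at this
    rcases this with (h0 | h0) | h0
    · exact hlcne h0
    · omega
    · exact han h0
end

section
/- Let n ≥ 5 and let aₙ ≠ 0. Suppose the ODE ẋ = aₙxⁿ + q(x) with deg q ≤ n−2 is quadratized by a single new variable z = z(x) having zero constant and linear coefficients. Then q(x) = ax² + bx for some a, b ∈ ℂ, and z can be taken to be x^{n-1}. In particular, if ẋ = aₙxⁿ + q(x) (deg q ≤ n−2) admits a one-variable quadratization, then the coefficients of q in degrees 3 through n−2 and in degree 0 all vanish. -/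
open Polynomial

lemma coeff_mul_zero' {u v : Polynomial ℂ} {k : ℕ}
    (h : ∀ i j : ℕ, i + j = k → u.coeff i * v.coeff j = 0) :
    (u * v).coeff k = 0 := by
  rw [Polynomial.coeff_mul]
  exact Finset.sum_eq_zero fun x hx => h x.1 x.2 (Finset.HasAntidiagonal.mem_antidiagonal.mp hx)

lemma coeff_mul_single' {u v : Polynomial ℂ} {k i₀ j₀ : ℕ} (hk : i₀ + j₀ = k)
    (h : ∀ i j : ℕ, i + j = k → (i, j) ≠ (i₀, j₀) → u.coeff i * v.coeff j = 0) :
    (u * v).coeff k = u.coeff i₀ * v.coeff j₀ := by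
  rw [Polynomial.coeff_mul]
  apply Finset.sum_eq_single (i₀, j₀)
  · exact fun b hb hne => h b.1 b.2 (Finset.HasAntidiagonal.mem_antidiagonal.mp hb) hne
  · exact fun h' => absurd (Finset.HasAntidiagonal.mem_antidiagonal.mpr hk) h'

lemma coeff_mul_pair' {u v : Polynomial ℂ} {k i₀ j₀ i₁ j₁ : ℕ} (h0 : i₀ + j₀ = k)
    (h1 : i₁ + j₁ = k) (hne : i₀ ≠ i₁)
    (h : ∀ i j : ℕ, i + j = k → (i, j) ≠ (i₀, j₀) → (i, j) ≠ (i₁, j₁) → u.coeff i * v.coeff j = 0) :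
    (u * v).coeff k = u.coeff i₀ * v.coeff j₀ + u.coeff i₁ * v.coeff j₁ := by
  rw [Polynomial.coeff_mul]
  have hsub : ({(i₀, j₀), (i₁, j₁)} : Finset (ℕ × ℕ)) ⊆ Finset.HasAntidiagonal.antidiagonal k := by
    intro x hx
    simp only [Finset.mem_insert, Finset.mem_singleton] at hx
    rcases hx with rfl | rfl <;> exact Finset.HasAntidiagonal.mem_antidiagonal.mpr (by assumption)
  rw [← Finset.sum_subset hsub]
  · rw [Finset.sum_pair (by simp [hne, Prod.ext_iff])]
  · intro x hx hnx
    simp only [Finset.mem_insert, Finset.mem_singleton, not_or] at hnx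
    exact h x.1 x.2 (Finset.HasAntidiagonal.mem_antidiagonal.mp hx) hnx.1 hnx.2

lemma quad_rep (h : MvPolynomial (Fin 2) ℂ) (hh : h.totalDegree ≤ 2) (P Q : Polynomial ℂ) :
    ∃ a b c d e f : ℂ, MvPolynomial.aeval ![P, Q] h =
      C a + C b * P + C c * Q + C d * P ^ 2 + C e * (P * Q) + C f * (Q * Q) := by
  set v : Fin 6 → Polynomial ℂ := ![1, P, Q, P ^ 2, P * Q, Q * Q] with hv
  have m0 : (1 : Polynomial ℂ) ∈ Submodule.span ℂ (Set.range v) :=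
    Submodule.subset_span ⟨0, by simp [hv]⟩
  have m1 : P ∈ Submodule.span ℂ (Set.range v) := Submodule.subset_span ⟨1, by simp [hv]⟩
  have m2 : Q ∈ Submodule.span ℂ (Set.range v) := Submodule.subset_span ⟨2, by simp [hv]⟩
  have m3 : P ^ 2 ∈ Submodule.span ℂ (Set.range v) := Submodule.subset_span ⟨3, by simp [hv]⟩
  have m4 : P * Q ∈ Submodule.span ℂ (Set.range v) := Submodule.subset_span ⟨4, by simp [hv]⟩
  have m5 : Q * Q ∈ Submodule.span ℂ (Set.range v) :=
    Submodule.subset_span ⟨5, rfl⟩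
  have hmem : MvPolynomial.aeval ![P, Q] h ∈ Submodule.span ℂ (Set.range v) := by
    rw [h.as_sum, map_sum]
    apply Submodule.sum_mem
    intro s hs
    have hds : s 0 + s 1 ≤ 2 := by
      have := MvPolynomial.le_totalDegree hs |>.trans hh
      rwa [Finsupp.sum_fintype _ _ (fun _ => rfl), Fin.sum_univ_two] at this
    rw [MvPolynomial.aeval_monomial]
    have hprod : (s.prod fun i k => (![P, Q] : Fin 2 → Polynomial ℂ) i ^ k)
        = P ^ (s 0) * Q ^ (s 1) := by
      rw [Finsupp.prod_fintype _ _ (fun _ => pow_zero _), Fin.prod_univ_two]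
      rfl
    rw [hprod]
    have h0 : s 0 ≤ 2 := le_trans (Nat.le_add_right _ _) hds
    have h1 : s 1 ≤ 2 := le_trans (Nat.le_add_left _ _) hds
    have key : P ^ (s 0) * Q ^ (s 1) ∈ Submodule.span ℂ (Set.range v) := by
      set i := s 0 with hi; set j := s 1 with hj
      clear_value i j
      have hds' : i + j ≤ 2 := hds
      interval_cases i <;> interval_cases j <;> try exact absurd hds' (by omega)
      · simpa using m0
      · simpa using m2
      · simpa [pow_two] using m5
      · simpa using m1
      · simpa using m4
      · simpa using m3
    have := Submodule.smul_mem _ (MvPolynomial.coeff s h) key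
    simpa [Algebra.smul_def] using this
  rw [Submodule.mem_span_range_iff_exists_fun] at hmem
  obtain ⟨c, hc⟩ := hmem
  refine ⟨c 0, c 1, c 2, c 3, c 4, c 5, ?_⟩
  rw [← hc, Fin.sum_univ_six]
  show c 0 • (1 : Polynomial ℂ) + c 1 • P + c 2 • Q + c 3 • P ^ 2 + c 4 • (P * Q)
      + c 5 • (Q * Q) = _
  simp only [Polynomial.smul_eq_C_mul]
  ring

theorem stmt9 (n : ℕ) (hn : 5 ≤ n) (an : ℂ) (han : an ≠ 0) (q : Polynomial ℂ)
    (hq : q.degree ≤ (n - 2 : ℕ)) (z : Polynomial ℂ)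
    (hz0 : z.coeff 0 = 0) (hz1 : z.coeff 1 = 0)
    (hquad : Quadratizes (C an * X ^ n + q) ![z]) :
    (∃ a b : ℂ, q = C a * X ^ 2 + C b * X) ∧
    Quadratizes (C an * X ^ n + q) ![X ^ (n - 1)] ∧
    (q.coeff 0 = 0 ∧ ∀ i : ℕ, 3 ≤ i → i ≤ n - 2 → q.coeff i = 0) := by
  obtain ⟨m, rfl⟩ : ∃ m, n = m + 5 := ⟨n - 5, by omega⟩
  rw [show m + 5 - 2 = m + 3 from by omega] at hq ⊢
  rw [show m + 5 - 1 = m + 4 from by omega]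
  set p : Polynomial ℂ := C an * X ^ (m + 5) + q with hpdef
  -- basic coefficient facts about q and p
  have hq0 : ∀ k, m + 3 < k → q.coeff k = 0 := fun k hk =>
    coeff_eq_zero_of_degree_lt (hq.trans_lt (by exact_mod_cast Nat.cast_lt.mpr hk))
  have hpc : ∀ k, p.coeff k = (if k = m + 5 then an else 0) + q.coeff k := by
    intro k
    simp [hpdef, coeff_X_pow, mul_ite]
  have hp_hi : ∀ k, m + 5 < k → p.coeff k = 0 := by
    intro k hk; rw [hpc, hq0 k (by omega), if_neg (by omega)]; ring
  have hp_top : p.coeff (m + 5) = an := by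
    rw [hpc, hq0 (m + 5) (by omega), if_pos rfl]; ring
  have hp_m4 : p.coeff (m + 4) = 0 := by
    rw [hpc, hq0 (m + 4) (by omega), if_neg (by omega)]; ring
  have hp_lo : ∀ k, k ≤ m + 3 → p.coeff k = q.coeff k := by
    intro k hk; rw [hpc, if_neg (by omega)]; ring
  -- unpack the quadratization
  obtain ⟨h, hdeg, hE1', hE2'⟩ := hquad
  obtain ⟨a1, b1, c1, d1, e1, f1, hh0⟩ := quad_rep (h 0) (hdeg 0) X z
  obtain ⟨a2, b2, c2, d2, e2, f2, hh1⟩ := quad_rep (h 1) (hdeg 1) X z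
  have E1 : p = C a1 + C b1 * X + C c1 * z + C d1 * X ^ 2 + C e1 * (X * z) + C f1 * (z * z) := by
    rw [← hE1']; exact hh0
  have E2 : derivative z * p =
      C a2 + C b2 * X + C c2 * z + C d2 * X ^ 2 + C e2 * (X * z) + C f2 * (z * z) := by
    exact (hE2' 0).symm.trans hh1
  -- z is nonzero of degree ≥ 2
  set d := z.natDegree with hddef
  have hzhi : ∀ k, d < k → z.coeff k = 0 := fun k hk => coeff_eq_zero_of_natDegree_lt hk
  have hzne : z ≠ 0 := by
    rintro rfl
    have := congrArg (fun r => r.coeff (m + 5)) E1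
    simp only [coeff_add, coeff_C_mul, coeff_C, mul_zero, coeff_X, coeff_X_pow,
      mul_ite, mul_one, zero_mul, add_zero, mul_comm] at this
    rw [hp_top] at this
    simp only [if_neg (by omega : ¬(m + 5 = 0)), if_neg (by omega : ¬(m + 5 = 1)),
      if_neg (by omega : ¬(m + 5 = 2))] at this
    simp at this
    exact han this
  have hc : z.coeff d ≠ 0 := by
    rw [hddef, ← leadingCoeff]; exact leadingCoeff_ne_zero.mpr hzne
  have hd2 : 2 ≤ d := by
    by_contra hlt
    push_neg at hlt
    interval_cases d
    · exact hc hz0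
    · exact hc hz1
  -- generic coefficient extraction for the RHS shape
  have hRHS : ∀ (A B C' D E F : ℂ) (k : ℕ), 3 ≤ k →
      (C A + C B * X + C C' * z + C D * X ^ 2 + C E * (X * z) + C F * (z * z)).coeff k
        = C' * z.coeff k + E * z.coeff (k - 1) + F * ((z * z).coeff k) := by
    intro A B C' D E F k hk
    obtain ⟨k', rfl⟩ : ∃ k', k = k' + 1 := ⟨k - 1, by omega⟩
    simp only [coeff_add, coeff_C_mul, coeff_C, coeff_X, coeff_X_pow, coeff_X_mul,
      Nat.add_sub_cancel]
    rw [if_neg (by omega : ¬(k' + 1 = 0)), if_neg (by omega : ¬(1 = k' + 1)),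
      if_neg (by omega : ¬(k' + 1 = 2))]
    ring
  have cmp1 : ∀ k, 3 ≤ k →
      p.coeff k = c1 * z.coeff k + e1 * z.coeff (k - 1) + f1 * ((z * z).coeff k) := by
    intro k hk
    conv_lhs => rw [E1]
    exact hRHS _ _ _ _ _ _ k hk
  have cmp2 : ∀ k, 3 ≤ k →
      (derivative z * p).coeff k
        = c2 * z.coeff k + e2 * z.coeff (k - 1) + f2 * ((z * z).coeff k) := by
    intro k hk
    conv_lhs => rw [E2]
    exact hRHS _ _ _ _ _ _ k hk
  -- z*z vanishing above 2d, and the top coefficient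
  have hzz0 : ∀ k, 2 * d < k → (z * z).coeff k = 0 := by
    intro k hk
    apply coeff_mul_zero'
    intro i j hij
    rcases le_or_gt i d with hi | hi
    · rw [hzhi j (by omega), mul_zero]
    · rw [hzhi i hi, zero_mul]
  have hzztop : (z * z).coeff (2 * d) = z.coeff d * z.coeff d := by
    apply coeff_mul_single' (by omega)
    intro i j hij hne
    rcases lt_trichotomy i d with hi | hi | hi
    · rw [hzhi j (by omega), mul_zero]
    · exact absurd (by simp [hi, Prod.ext_iff]; omega) hne
    · rw [hzhi i hi, zero_mul]
  have hdc : ((d - 1 : ℕ) : ℂ) + 1 = (d : ℂ) := by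
    exact_mod_cast congrArg (Nat.cast : ℕ → ℂ) (show d - 1 + 1 = d from by omega)
  -- Stage A : m + 5 < 2 * d
  have h2d : m + 5 < 2 * d := by
    rcases lt_trichotomy (2 * d) (m + 5) with hlt | heq | hgt
    · exfalso
      have comp := cmp1 (m + 5) (by omega)
      rw [show m + 5 - 1 = m + 4 from by omega, hp_top, hzhi (m + 5) (by omega),
        hzhi (m + 4) (by omega), hzz0 (m + 5) (by omega)] at comp
      simp at comp
      exact han comp
    · exfalso
      have hd3 : 3 ≤ d := by omega
      have comp := cmp2 (3 * d - 1) (by omega)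
      have hL : (derivative z * p).coeff (3 * d - 1) = z.coeff d * ((d : ℂ)) * an := by
        rw [coeff_mul_single' (show d - 1 + (2 * d) = 3 * d - 1 from by omega)]
        · rw [coeff_derivative, show d - 1 + 1 = d from by omega, heq, hp_top, hdc]
        · intro i j hij hne
          rcases le_or_gt d i with hi | hi
          · rw [coeff_derivative, hzhi (i + 1) (by omega), zero_mul, zero_mul]
          · have hine : i ≠ d - 1 := by
              rintro rfl
              exact hne (by simp [Prod.ext_iff]; omega)
            rw [hp_hi j (by omega), mul_zero]
      rw [hL, hzhi (3 * d - 1) (by omega), hzhi (3 * d - 1 - 1) (by omega),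
        hzz0 (3 * d - 1) (by omega)] at comp
      simp at comp
      rcases comp with (comp | comp) | comp
      · exact hc comp
      · omega
      · exact han comp
    · exact hgt
  -- Stage B : f1 = 0
  have hf1 : f1 = 0 := by
    have comp := cmp1 (2 * d) (by omega)
    rw [hp_hi (2 * d) (by omega), hzhi (2 * d) (by omega), hzhi (2 * d - 1) (by omega),
      hzztop] at comp
    simp only [mul_zero, zero_add, add_zero, zero_mul] at comp
    rcases mul_eq_zero.mp comp.symm with h' | h'
    · exact h'
    · exact absurd (mul_self_eq_zero.mp h') hc
  -- Stage C : d = m + 4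
  have hd4 : d = m + 4 := by
    rcases lt_trichotomy d (m + 4) with hlt | heq | hgt
    · exfalso
      have comp := cmp1 (m + 5) (by omega)
      rw [show m + 5 - 1 = m + 4 from by omega, hp_top, hzhi (m + 5) (by omega),
        hzhi (m + 4) (by omega), hf1] at comp
      simp at comp
      exact han comp
    · exact heq
    · exfalso
      have he1 : e1 = 0 := by
        have comp := cmp1 (d + 1) (by omega)
        rw [show d + 1 - 1 = d from by omega, hp_hi (d + 1) (by omega),
          hzhi (d + 1) (by omega), hf1] at comp
        simp only [mul_zero, zero_mul, add_zero, zero_add] at comp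
        rcases mul_eq_zero.mp comp.symm with h' | h'
        · exact h'
        · exact absurd h' hc
      have hpd : p.coeff d = c1 * z.coeff d := by
        have comp := cmp1 d (by omega)
        rw [he1, hf1] at comp
        rw [comp]; ring
      rcases eq_or_lt_of_le (show m + 5 ≤ d from by omega) with heq5 | hgt5
      · -- d = m + 5
        have hf2 : f2 = 0 := by
          have comp := cmp2 (2 * d) (by omega)
          have hL : (derivative z * p).coeff (2 * d) = 0 := by
            apply coeff_mul_zero'
            intro i j hij
            rcases le_or_gt d i with hi | hi
            · rw [coeff_derivative, hzhi (i + 1) (by omega), zero_mul, zero_mul]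
            · rw [hp_hi j (by omega), mul_zero]
          rw [hL, hzhi (2 * d) (by omega), hzhi (2 * d - 1) (by omega), hzztop] at comp
          simp only [mul_zero, zero_add, add_zero, zero_mul] at comp
          rcases mul_eq_zero.mp comp.symm with h' | h'
          · exact h'
          · exact absurd (mul_self_eq_zero.mp h') hc
        have hpda : p.coeff d = an := by rw [← heq5, hp_top]
        have comp := cmp2 (2 * d - 1) (by omega)
        have hL : (derivative z * p).coeff (2 * d - 1) = z.coeff d * ((d : ℂ)) * an := by
          rw [coeff_mul_single' (show d - 1 + d = 2 * d - 1 from by omega)]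
          · rw [coeff_derivative, show d - 1 + 1 = d from by omega, hpda, hdc]
          · intro i j hij hne
            rcases le_or_gt d i with hi | hi
            · rw [coeff_derivative, hzhi (i + 1) (by omega), zero_mul, zero_mul]
            · have hine : i ≠ d - 1 := by
                rintro rfl
                exact hne (by simp [Prod.ext_iff]; omega)
              rw [hp_hi j (by omega), mul_zero]
        rw [hL, hf2, hzhi (2 * d - 1) (by omega), hzhi (2 * d - 1 - 1) (by omega)] at comp
        simp at comp
        rcases comp with (comp | comp) | comp
        · exact hc comp
        · omega
        · exact han comp
      · -- d > m + 5
        have hc1 : c1 = 0 := by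
          have h0 : p.coeff d = 0 := hp_hi d (by omega)
          rw [h0] at hpd
          rcases mul_eq_zero.mp hpd.symm with h' | h'
          · exact h'
          · exact absurd h' hc
        have comp := cmp1 (m + 5) (by omega)
        rw [hp_top, hc1, he1, hf1] at comp
        simp at comp
        exact han comp
  -- Main case: d = m + 4
  have hc4 : z.coeff (m + 4) ≠ 0 := by rw [← hd4]; exact hc
  have hzhi' : ∀ k, m + 4 < k → z.coeff k = 0 := fun k hk => hzhi k (by omega)
  -- D1 : e1 * c = an
  have hD1 : e1 * z.coeff (m + 4) = an := by
    have comp := cmp1 (m + 5) (by omega)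
    rw [show m + 5 - 1 = m + 4 from by omega, hp_top, hzhi' (m + 5) (by omega), hf1] at comp
    rw [comp]; ring
  -- D2 : 0 = c1 * c + e1 * z_{m+3}
  have hD2 : 0 = c1 * z.coeff (m + 4) + e1 * z.coeff (m + 3) := by
    have comp := cmp1 (m + 4) (by omega)
    rw [show m + 4 - 1 = m + 3 from by omega, hp_m4, hf1] at comp
    rw [comp]; ring
  -- D3 : f2 * c^2 = (m+4) * c * an
  have hzz8 : (z * z).coeff (2 * m + 8) = z.coeff (m + 4) * z.coeff (m + 4) := by
    have := hzztop
    rw [hd4, show 2 * (m + 4) = 2 * m + 8 from by omega] at this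
    exact this
  have hD3 : f2 * (z.coeff (m + 4) * z.coeff (m + 4))
      = z.coeff (m + 4) * ((m : ℂ) + 4) * an := by
    have comp := cmp2 (2 * m + 8) (by omega)
    have hL : (derivative z * p).coeff (2 * m + 8)
        = z.coeff (m + 4) * ((m : ℂ) + 4) * an := by
      rw [coeff_mul_single' (show m + 3 + (m + 5) = 2 * m + 8 from by omega)]
      · rw [coeff_derivative, show m + 3 + 1 = m + 4 from rfl, hp_top]
        push_cast
        ring
      · intro i j hij hne
        rcases le_or_gt (m + 4) i with hi | hi
        · rw [coeff_derivative, hzhi' (i + 1) (by omega), zero_mul, zero_mul]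
        · have hine : i ≠ m + 3 := by
            rintro rfl
            exact hne (by simp [Prod.ext_iff]; omega)
          rw [hp_hi j (by omega), mul_zero]
    rw [hL, hzhi' (2 * m + 8) (by omega), show 2 * m + 8 - 1 = 2 * m + 7 from by omega,
      hzhi' (2 * m + 7) (by omega), hzz8] at comp
    linear_combination -comp
  -- D4 : z_{m+3} = 0
  have hD4 : z.coeff (m + 3) = 0 := by
    have hzz7 : (z * z).coeff (2 * m + 7)
        = z.coeff (m + 3) * z.coeff (m + 4) + z.coeff (m + 4) * z.coeff (m + 3) := by
      apply coeff_mul_pair' (show m + 3 + (m + 4) = 2 * m + 7 from by omega)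
        (show m + 4 + (m + 3) = 2 * m + 7 from by omega) (by omega)
      intro i j hij hne1 hne2
      have hi3 : i ≠ m + 3 := by
        rintro rfl; exact hne1 (by simp [Prod.ext_iff]; omega)
      have hi4 : i ≠ m + 4 := by
        rintro rfl; exact hne2 (by simp [Prod.ext_iff]; omega)
      rcases lt_or_gt_of_ne hi3 with hi | hi
      · rw [hzhi' j (by omega), mul_zero]
      · rw [hzhi' i (by omega), zero_mul]
    have comp := cmp2 (2 * m + 7) (by omega)
    have hL : (derivative z * p).coeff (2 * m + 7)
        = z.coeff (m + 3) * ((m : ℂ) + 3) * an := by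
      rw [coeff_mul_single' (show m + 2 + (m + 5) = 2 * m + 7 from by omega)]
      · rw [coeff_derivative, show m + 2 + 1 = m + 3 from rfl, hp_top]
        push_cast
        ring
      · intro i j hij hne
        rcases le_or_gt (m + 4) i with hi | hi
        · rw [coeff_derivative, hzhi' (i + 1) (by omega), zero_mul, zero_mul]
        · rcases eq_or_ne i (m + 3) with hi3 | hi3
          · have : j = m + 4 := by omega
            rw [this, hp_m4, mul_zero]
          · have hine : i ≠ m + 2 := by
              rintro rfl
              exact hne (by simp [Prod.ext_iff]; omega)
            rw [hp_hi j (by omega), mul_zero]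
    rw [hL, hzhi' (2 * m + 7) (by omega), show 2 * m + 7 - 1 = 2 * m + 6 from by omega,
      hzhi' (2 * m + 6) (by omega), hzz7] at comp
    -- comp : z₃ * (m+3) * an = c2 * 0 + e2 * 0 + f2 * (z₃ z₄ + z₄ z₃)
    have key : z.coeff (m + 3) * z.coeff (m + 4) * an * ((m : ℂ) + 5) = 0 := by
      linear_combination (-(z.coeff (m + 4))) * comp + (-(2 * z.coeff (m + 3))) * hD3
    rcases mul_eq_zero.mp key with key | key
    · rcases mul_eq_zero.mp key with key | key
      · rcases mul_eq_zero.mp key with key | key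
        · exact key
        · exact absurd key hc4
      · exact absurd key han
    · exfalso
      have : ((m : ℂ) + 5) ≠ 0 := by
        exact_mod_cast (Nat.cast_ne_zero (R := ℂ)).mpr (show m + 5 ≠ 0 by omega)
      exact this key
  -- D5 : c1 = 0
  have hc1 : c1 = 0 := by
    rw [hD4, mul_zero, add_zero] at hD2
    rcases mul_eq_zero.mp hD2.symm with h' | h'
    · exact h'
    · exact absurd h' hc4
  -- D6 : q coefficients in middle range
  have hD6 : ∀ k, 3 ≤ k → k ≤ m + 3 → q.coeff k = e1 * z.coeff (k - 1) := by
    intro k hk1 hk2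
    have comp := cmp1 k (by omega)
    rw [hp_lo k (by omega), hc1, hf1] at comp
    rw [comp]; ring
  -- D7 : downward induction, middle z coefficients vanish
  have hD7 : ∀ t s, 2 ≤ s → s ≤ m + 3 → m + 3 - s ≤ t → z.coeff s = 0 := by
    intro t
    induction t with
    | zero =>
      intro s hs1 hs2 hs3
      have hse : s = m + 3 := by omega
      rw [hse]; exact hD4
    | succ t IH =>
      intro s hs1 hs2 hs3
      rcases le_or_gt (m + 3 - s) t with hle | hlt
      · exact IH s hs1 hs2 hle
      · have hsle : s ≤ m + 2 := by omega
        have hIH : ∀ j, s < j → j ≤ m + 3 → z.coeff j = 0 := by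
          intro j h1 h2
          exact IH j (by omega) h2 (by omega)
        have comp := cmp2 (s + m + 4) (by omega)
        have hqz : q.coeff (s + 1) = e1 * z.coeff s := by
          have hh := hD6 (s + 1) (by omega) (by omega)
          rwa [show s + 1 - 1 = s from by omega] at hh
        have hL : (derivative z * p).coeff (s + m + 4)
            = z.coeff s * (s : ℂ) * an
              + z.coeff (m + 4) * ((m : ℂ) + 4) * (e1 * z.coeff s) := by
          rw [coeff_mul_pair' (show s - 1 + (m + 5) = s + m + 4 from by omega)
            (show m + 3 + (s + 1) = s + m + 4 from by omega) (by omega)]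
          · rw [coeff_derivative, show s - 1 + 1 = s from by omega, hp_top,
              coeff_derivative, show m + 3 + 1 = m + 4 from rfl,
              hp_lo (s + 1) (by omega), hqz]
            have hsc : ((s - 1 : ℕ) : ℂ) + 1 = (s : ℂ) := by
              exact_mod_cast congrArg (Nat.cast : ℕ → ℂ) (show s - 1 + 1 = s from by omega)
            rw [hsc]
            push_cast
            ring
          · intro i j hij hne1 hne2
            rcases le_or_gt (m + 4) i with hi | hi
            · rw [coeff_derivative, hzhi' (i + 1) (by omega), zero_mul, zero_mul]
            · rcases lt_trichotomy i (s - 1) with h' | h' | h'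
              · rw [hp_hi j (by omega), mul_zero]
              · exfalso
                apply hne1
                simp [Prod.ext_iff]
                omega
              · have hi3 : i ≠ m + 3 := by
                  rintro rfl
                  exact hne2 (by simp [Prod.ext_iff]; omega)
                rw [coeff_derivative, hIH (i + 1) (by omega) (by omega), zero_mul, zero_mul]
        have hzzs : (z * z).coeff (s + m + 4)
            = z.coeff s * z.coeff (m + 4) + z.coeff (m + 4) * z.coeff s := by
          apply coeff_mul_pair' (show s + (m + 4) = s + m + 4 from by omega)
            (show m + 4 + s = s + m + 4 from by omega) (by omega)
          intro i j hij hne1 hne2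
          have hi1 : i ≠ s := by rintro rfl; exact hne1 (by simp [Prod.ext_iff]; omega)
          have hi2 : i ≠ m + 4 := by rintro rfl; exact hne2 (by simp [Prod.ext_iff]; omega)
          rcases lt_trichotomy i s with h' | h' | h'
          · rw [hzhi' j (by omega), mul_zero]
          · exact absurd h' hi1
          · rcases le_or_gt i (m + 3) with h'' | h''
            · rw [hIH i h' h'', zero_mul]
            · rw [hzhi' i (by omega), zero_mul]
        rw [hL, hzhi' (s + m + 4) (by omega), show s + m + 4 - 1 = s + m + 3 from by omega,
          hzhi' (s + m + 3) (by omega), hzzs] at comp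
        have key : z.coeff s * z.coeff (m + 4) * an * (((m : ℂ) + 4) - (s : ℂ)) = 0 := by
          linear_combination (-(z.coeff (m + 4))) * comp + (-(2 * z.coeff s)) * hD3
            + (z.coeff (m + 4) * ((m : ℂ) + 4) * z.coeff s) * hD1
        rcases mul_eq_zero.mp key with key | key
        · rcases mul_eq_zero.mp key with key | key
          · rcases mul_eq_zero.mp key with key | key
            · exact key
            · exact absurd key hc4
          · exact absurd key han
        · exfalso
          have h1 : ((m : ℂ) + 4) = (s : ℂ) := sub_eq_zero.mp key
          have h2 : ((m + 4 : ℕ) : ℂ) = ((s : ℕ) : ℂ) := by push_cast; exact h1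
          have h3 : m + 4 = s := Nat.cast_injective h2
          omega
  have hzall : ∀ j, j ≠ m + 4 → z.coeff j = 0 := by
    intro j hj
    rcases lt_or_ge j 2 with h' | h'
    · interval_cases j
      · exact hz0
      · exact hz1
    · rcases le_or_gt j (m + 3) with h'' | h''
      · exact hD7 (m + 3) j h' h'' (by omega)
      · exact hzhi' j (by omega)
  have hq30 : ∀ k, 3 ≤ k → k ≤ m + 3 → q.coeff k = 0 := by
    intro k h1 h2
    rw [hD6 k h1 h2, hzall (k - 1) (by omega), mul_zero]
  have hq00 : q.coeff 0 = 0 := by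
    have comp := cmp2 (m + 3) (by omega)
    have hL : (derivative z * p).coeff (m + 3)
        = z.coeff (m + 4) * ((m : ℂ) + 4) * q.coeff 0 := by
      rw [coeff_mul_single' (show m + 3 + 0 = m + 3 from by omega)]
      · rw [coeff_derivative, show m + 3 + 1 = m + 4 from rfl, hp_lo 0 (by omega)]
        push_cast
        ring
      · intro i j hij hne
        rcases eq_or_ne i (m + 3) with hi | hi
        · exfalso
          apply hne
          simp [Prod.ext_iff]
          omega
        · rw [coeff_derivative, hzall (i + 1) (by omega), zero_mul, zero_mul]
    have hzz3 : (z * z).coeff (m + 3) = 0 := by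
      apply coeff_mul_zero'
      intro i j hij
      rw [hzall i (by omega), zero_mul]
    rw [hL, hzall (m + 3) (by omega), show m + 3 - 1 = m + 2 from by omega,
      hzall (m + 2) (by omega), hzz3] at comp
    simp only [mul_zero, add_zero, zero_add] at comp
    rcases mul_eq_zero.mp comp with h' | h'
    · rcases mul_eq_zero.mp h' with h'' | h''
      · exact absurd h'' hc4
      · exfalso
        have hcc : ((m + 4 : ℕ) : ℂ) = 0 := by push_cast; exact h''
        exact Nat.cast_ne_zero.mpr (show m + 4 ≠ 0 by omega) hcc
    · exact h'
  -- q has the claimed shape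
  have hqform : q = C (q.coeff 2) * X ^ 2 + C (q.coeff 1) * X := by
    ext k
    simp only [coeff_add, coeff_C_mul, coeff_X_pow, coeff_X, mul_ite, mul_one, mul_zero]
    rcases lt_or_ge k 3 with hk | hk
    · interval_cases k
      · simpa using hq00
      · simp
      · simp
    · rw [if_neg (by omega), if_neg (by omega), add_zero]
      rcases le_or_gt k (m + 3) with h' | h'
      · exact hq30 k hk h'
      · exact hq0 k h'
  -- the quadratization by X ^ (m + 4)
  have hquad' : Quadratizes p ![X ^ (m + 4)] := by
    set H0 : MvPolynomial (Fin 2) ℂ :=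
      MvPolynomial.C an * (MvPolynomial.X 0 * MvPolynomial.X 1)
        + MvPolynomial.C (q.coeff 2) * (MvPolynomial.X 0 * MvPolynomial.X 0)
        + MvPolynomial.C (q.coeff 1) * MvPolynomial.X 0 with hH0
    set H1 : MvPolynomial (Fin 2) ℂ :=
      MvPolynomial.C (((m + 4 : ℕ) : ℂ)) *
        (MvPolynomial.C an * (MvPolynomial.X 1 * MvPolynomial.X 1)
        + MvPolynomial.C (q.coeff 2) * (MvPolynomial.X 0 * MvPolynomial.X 1)
        + MvPolynomial.C (q.coeff 1) * MvPolynomial.X 1) with hH1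
    have hX2 : ∀ i j : Fin 2,
        (MvPolynomial.X i * MvPolynomial.X j : MvPolynomial (Fin 2) ℂ).totalDegree ≤ 2 := by
      intro i j
      refine le_trans (MvPolynomial.totalDegree_mul _ _) ?_
      simp [MvPolynomial.totalDegree_X]
    have hX1 : ∀ i : Fin 2, (MvPolynomial.X i : MvPolynomial (Fin 2) ℂ).totalDegree ≤ 2 := by
      intro i
      simp [MvPolynomial.totalDegree_X]
    have hCmul : ∀ (r : ℂ) (t : MvPolynomial (Fin 2) ℂ), t.totalDegree ≤ 2 →
        (MvPolynomial.C r * t).totalDegree ≤ 2 := by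
      intro r t ht
      refine le_trans (MvPolynomial.totalDegree_mul _ _) ?_
      simpa [MvPolynomial.totalDegree_C] using ht
    have hdeg0 : H0.totalDegree ≤ 2 := by
      rw [hH0]
      refine le_trans (MvPolynomial.totalDegree_add _ _) (max_le ?_ ?_)
      · refine le_trans (MvPolynomial.totalDegree_add _ _) (max_le ?_ ?_)
        · exact hCmul _ _ (hX2 0 1)
        · exact hCmul _ _ (hX2 0 0)
      · exact hCmul _ _ (hX1 0)
    have hdeg1 : H1.totalDegree ≤ 2 := by
      rw [hH1]
      refine hCmul _ _ ?_
      refine le_trans (MvPolynomial.totalDegree_add _ _) (max_le ?_ ?_)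
      · refine le_trans (MvPolynomial.totalDegree_add _ _) (max_le ?_ ?_)
        · exact hCmul _ _ (hX2 1 1)
        · exact hCmul _ _ (hX2 0 1)
      · exact hCmul _ _ (hX1 1)
    refine ⟨Fin.cons H0 (fun _ => H1), ?_, ?_, ?_⟩
    · intro i
      refine Fin.cases ?_ (fun j => ?_) i
      · simpa using hdeg0
      · simpa using hdeg1
    · simp only [Fin.cons_zero]
      rw [hH0,
        show (Fin.cons X ![X ^ (m + 4)] : Fin 2 → Polynomial ℂ) = ![X, X ^ (m + 4)] from rfl]
      simp only [map_add, map_mul, MvPolynomial.aeval_C, MvPolynomial.aeval_X,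
        Matrix.cons_val_zero, Matrix.cons_val_one, Matrix.head_cons, algebraMap_eq]
      rw [hpdef]
      conv_rhs => rw [hqform]
      ring
    · intro i
      rw [Subsingleton.elim i (0 : Fin 1)]
      simp only [Fin.cons_succ, Matrix.cons_val_zero]
      rw [hH1,
        show (Fin.cons X ![X ^ (m + 4)] : Fin 2 → Polynomial ℂ) = ![X, X ^ (m + 4)] from rfl]
      simp only [map_add, map_mul, MvPolynomial.aeval_C, MvPolynomial.aeval_X,
        Matrix.cons_val_zero, Matrix.cons_val_one, Matrix.head_cons, algebraMap_eq]
      rw [derivative_X_pow, show m + 4 - 1 = m + 3 from by omega, hpdef]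
      conv_rhs => rw [hqform]
      push_cast
      ring
  refine ⟨⟨q.coeff 2, q.coeff 1, hqform⟩, hquad', hq00, fun i h3 hi => hq30 i h3 hi⟩
end

section
/- Let n ≥ 5. For the ODE ẋ = (x+1)ⁿ, the single new variable z := xⁿ⁻¹ quadratizes the shifted ODE ẏ = yⁿ obtained by the substitution x = y − 1; hence ẋ = (x+1)ⁿ admits a quadratization of order 1 with the non-monomial new variable z := (x+1)^{n-1}. -/
open Polynomial

lemma quad_aux_s11 (n : ℕ) (hn : 5 ≤ n) (p : Polynomial ℂ) (hp : derivative p = 1)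
    (q : MvPolynomial (Fin 2) ℂ) (hq : q.totalDegree ≤ 1)
    (hqe : MvPolynomial.aeval (Fin.cons X ![p ^ (n - 1)]) q = p) :
    Quadratizes (p ^ n) ![p ^ (n - 1)] := by
  refine ⟨![q * MvPolynomial.X 1,
      MvPolynomial.C ((n - 1 : ℕ) : ℂ) * (MvPolynomial.X 1) ^ 2], ?_, ?_, ?_⟩
  · intro i
    fin_cases i
    · refine le_trans (MvPolynomial.totalDegree_mul _ _) ?_
      have := MvPolynomial.totalDegree_X (R := ℂ) (1 : Fin 2)
      omega
    · refine le_trans (MvPolynomial.totalDegree_mul _ _) ?_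
      have h1 : (MvPolynomial.C ((n - 1 : ℕ) : ℂ) : MvPolynomial (Fin 2) ℂ).totalDegree = 0 :=
        MvPolynomial.totalDegree_C _
      have h2 : ((MvPolynomial.X 1 : MvPolynomial (Fin 2) ℂ) ^ 2).totalDegree ≤ 2 := by
        refine le_trans (MvPolynomial.totalDegree_pow _ _) ?_
        simp [MvPolynomial.totalDegree_X]
      omega
  · show MvPolynomial.aeval (Fin.cons X ![p ^ (n - 1)]) (q * MvPolynomial.X 1) = p ^ n
    rw [map_mul, hqe, MvPolynomial.aeval_X]
    show p * p ^ (n - 1) = p ^ n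
    rw [← pow_succ']
    congr 1
    omega
  · intro i
    fin_cases i
    show MvPolynomial.aeval (Fin.cons X ![p ^ (n - 1)])
        (MvPolynomial.C ((n - 1 : ℕ) : ℂ) * (MvPolynomial.X 1) ^ 2)
        = derivative (![p ^ (n - 1)] 0) * p ^ n
    rw [map_mul, map_pow, MvPolynomial.aeval_X, MvPolynomial.aeval_C]
    show ((algebraMap ℂ (Polynomial ℂ)) ((n-1:ℕ):ℂ)) * (p ^ (n - 1)) ^ 2
        = derivative (p ^ (n - 1)) * p ^ n
    rw [derivative_pow, hp]
    rw [mul_one]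
    rw [algebraMap_eq]
    rw [← pow_mul, mul_assoc, ← pow_add]
    congr 2
    omega

theorem stmt11 (n : ℕ) (hn : 5 ≤ n) :
    Quadratizes ((X : Polynomial ℂ) ^ n) ![X ^ (n - 1)] ∧
    Quadratizes (((X : Polynomial ℂ) + 1) ^ n) ![(X + 1) ^ (n - 1)] := by
  constructor
  · refine quad_aux_s11 n hn X derivative_X (MvPolynomial.X 0) (by simp) ?_
    simp
  · refine quad_aux_s11 n hn (X + 1) (by simp) (MvPolynomial.X 0 + 1) ?_ ?_
    · refine le_trans (MvPolynomial.totalDegree_add _ _) ?_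
      simp [MvPolynomial.totalDegree_X, MvPolynomial.totalDegree_one]
    · simp
end

section
/- Let n ≥ 2 and suppose the ODE ẋ = (x+1)ⁿ is quadratized by k monomial new variables z_i = x^{d_i} with d_i ≥ 2. Then C(k+3, 2) ≥ n + 1, and hence k ≥ (−5 + √(8n+9))/2. -/
open Polynomial

lemma sum_map_toMultiset {m : ℕ} (a : Fin m →₀ ℕ) (E : Fin m → ℕ) :
    (a.toMultiset.map E).sum = a.sum fun j e => e * E j := by
  induction a using Finsupp.induction₂ with
  | zero => simp
  | add_single j n a _ _ ih =>
      simp [Finsupp.toMultiset_add, Finsupp.toMultiset_single, Multiset.map_nsmul, ih,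
        Finsupp.sum_add_index, add_mul, Multiset.sum_nsmul]

lemma poly_support_sum {α : Type*} [DecidableEq α] (s : Finset α) (p : α → Polynomial ℂ) :
    (∑ a ∈ s, p a).support ⊆ s.biUnion fun a => (p a).support := by
  classical
  induction s using Finset.induction_on with
  | empty => simp
  | insert _ _ h ih =>
      rw [Finset.sum_insert h, Finset.biUnion_insert]
      exact (Polynomial.support_add).trans (Finset.union_subset_union le_rfl ih)

lemma support_aeval_subset {m : ℕ} (E : Fin m → ℕ) (q : MvPolynomial (Fin m) ℂ) :
    (MvPolynomial.aeval (fun j => (X : Polynomial ℂ) ^ E j) q).support ⊆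
      q.support.image (fun a => (a.toMultiset.map E).sum) := by
  classical
  intro e he
  have hq : (MvPolynomial.aeval (fun j => (X : Polynomial ℂ) ^ E j) q) =
      ∑ a ∈ q.support, C (q.coeff a) * X ^ ((a.toMultiset.map E).sum) := by
    conv_lhs => rw [q.as_sum]
    rw [map_sum]
    refine Finset.sum_congr rfl fun a _ => ?_
    rw [MvPolynomial.aeval_monomial, sum_map_toMultiset]
    congr 1
    rw [Finsupp.prod, Finsupp.sum, ← Finset.prod_pow_eq_pow_sum]
    exact Finset.prod_congr rfl fun j _ => by rw [← pow_mul, mul_comm]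
  rw [hq] at he
  obtain ⟨a, ha, hea⟩ := Finset.mem_biUnion.mp (poly_support_sum _ _ he)
  have : e = (a.toMultiset.map E).sum :=
    Finset.mem_singleton.mp (Polynomial.support_C_mul_X_pow' _ _ hea)
  exact Finset.mem_image.mpr ⟨a, ha, this.symm⟩

lemma main_count (n k : ℕ) (d : Fin k → ℕ) (h : MvPolynomial (Fin (k+1)) ℂ)
    (h0 : MvPolynomial.aeval (Fin.cons X (fun i => X ^ d i)) h
      = ((X : Polynomial ℂ) + 1) ^ n)
    (hdeg : h.totalDegree ≤ 2) :
    n + 1 ≤ (k + 3).choose 2 := by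
  classical
  set E : Fin (k + 1) → ℕ := Fin.cons 1 d with hE
  have hφ : (Fin.cons X (fun i => (X : Polynomial ℂ) ^ d i) : Fin (k+1) → Polynomial ℂ)
      = fun j => X ^ E j := by
    funext j
    refine Fin.cases ?_ (fun i => ?_) j <;> simp [hE]
  have hsupp : (((X : Polynomial ℂ) + 1) ^ n).support = Finset.range (n + 1) := by
    ext e
    simp only [Polynomial.mem_support_iff, Finset.mem_range, Polynomial.coeff_X_add_one_pow,
      Nat.cast_ne_zero]
    constructor
    · intro hp
      by_contra hlt
      exact hp (Nat.choose_eq_zero_of_lt (by omega))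
    · intro hlt
      exact Nat.pos_iff_ne_zero.mp (Nat.choose_pos (by omega))
  set E' : Option (Fin (k + 1)) → ℕ := fun o => o.elim 0 E with hE'
  set F : Sym (Option (Fin (k + 1))) 2 → ℕ := fun s => ((s : Multiset _).map E').sum with hF
  have hsub : Finset.range (n + 1) ⊆ Finset.univ.image F := by
    intro e he
    rw [← hsupp, ← h0, hφ] at he
    obtain ⟨a, ha, hea⟩ := Finset.mem_image.mp (support_aeval_subset E h he)
    have hcard : Multiset.card a.toMultiset ≤ 2 := by
      rw [Finsupp.card_toMultiset]
      exact le_trans (MvPolynomial.le_totalDegree ha) hdeg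
    set c := Multiset.card a.toMultiset with hc
    refine Finset.mem_image.mpr ⟨⟨a.toMultiset.map some + Multiset.replicate (2 - c) none, ?_⟩,
      Finset.mem_univ _, ?_⟩
    · have : c + (2 - c) = 2 := Nat.add_sub_cancel' hcard
      simpa [hc, Finsupp.card_toMultiset] using this
    · simp only [hF, Sym.coe_mk, Multiset.map_add, Multiset.map_map, Multiset.map_replicate,
        Multiset.sum_add, Multiset.sum_replicate]
      have : E' ∘ some = E := rfl
      rw [this]
      simp [hE', ← hea]
  have hcardsym : Fintype.card (Sym (Option (Fin (k + 1))) 2) = (k + 3).choose 2 := by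
    rw [Sym.card_sym_eq_multichoose, Nat.multichoose_eq]
    simp
  calc n + 1 = (Finset.range (n + 1)).card := by simp
    _ ≤ (Finset.univ.image F).card := Finset.card_le_card hsub
    _ ≤ (Finset.univ : Finset (Sym (Option (Fin (k + 1))) 2)).card := Finset.card_image_le
    _ = (k + 3).choose 2 := by rw [Finset.card_univ, hcardsym]

theorem stmt12 (n k : ℕ) (hn : 2 ≤ n) (d : Fin k → ℕ) (hd : ∀ i, 2 ≤ d i)
    (hquad : Quadratizes (((X : Polynomial ℂ) + 1) ^ n) (fun i => X ^ d i)) :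
    n + 1 ≤ (k + 3).choose 2 ∧ (-5 + Real.sqrt (8 * n + 9)) / 2 ≤ k := by
  obtain ⟨h, hdeg, h0, -⟩ := hquad
  have h1 : n + 1 ≤ (k + 3).choose 2 := main_count n k d (h 0) h0 (hdeg 0)
  refine ⟨h1, ?_⟩
  have h2 : 2 * (n + 1) ≤ (k + 3) * (k + 2) := by
    have hc : (k + 3).choose 2 = (k + 3) * (k + 2) / 2 := by
      rw [Nat.choose_two_right]; norm_num
    have heven : (k + 3) * (k + 2) % 2 = 0 := by
      have he : Even ((k + 3) * (k + 2)) := by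
        rw [mul_comm]; exact Nat.even_mul_succ_self (k + 2)
      exact Nat.even_iff.mp he
    omega
  have h2' : 2 * ((n : ℝ) + 1) ≤ ((k : ℝ) + 3) * ((k : ℝ) + 2) := by
    exact_mod_cast h2
  have hr : Real.sqrt (8 * n + 9) ≤ 2 * k + 5 := by
    rw [show (2 * (k : ℝ) + 5) = Real.sqrt ((2 * (k : ℝ) + 5) ^ 2) from
      (Real.sqrt_sq (by positivity)).symm]
    apply Real.sqrt_le_sqrt
    nlinarith
  linarith
end

section
/- Let n ≥ 5 and let ẋ = p(x) with deg p = n be quadratized by k ≥ 2 new variables z₁, ..., z_k each of degree at most n−1 and each of degree at least 2. Then at least one of the z_i has degree exactly n−1. -/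
open Polynomial

theorem stmt13 (n k : ℕ) (hn : 5 ≤ n) (hk : 2 ≤ k) (p : Polynomial ℂ)
    (hdeg : p.natDegree = n) (z : Fin k → Polynomial ℂ)
    (hz : ∀ i, 2 ≤ (z i).natDegree ∧ (z i).natDegree ≤ n - 1)
    (hquad : Quadratizes p z) :
    ∃ i, (z i).natDegree = n - 1 := by
  obtain ⟨h, hdeg2, _, hrel⟩ := hquad
  -- pick i0 maximizing natDegree of z
  have hkpos : 0 < k := by omega
  haveI : Nonempty (Fin k) := ⟨⟨0, hkpos⟩⟩
  obtain ⟨i0, hi0⟩ := Finite.exists_max (fun i => (z i).natDegree)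
  set D := (z i0).natDegree with hD
  have hD2 : 2 ≤ D := (hz i0).1
  have hDle : D ≤ n - 1 := (hz i0).2
  -- all substituted polynomials have degree ≤ D
  have hbound : ∀ j : Fin (k + 1), ((Fin.cons X z : Fin (k+1) → Polynomial ℂ) j).natDegree ≤ D := by
    intro j
    refine Fin.cases ?_ ?_ j
    · simp only [Fin.cons_zero]
      exact natDegree_X_le.trans (by omega)
    · intro i; simpa using hi0 i
  have hlhs : (MvPolynomial.aeval (Fin.cons X z) (h i0.succ)).natDegree ≤ 2 * D :=
    MvPolynomial.aeval_natDegree_le _ (hdeg2 _) _ hbound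
  rw [hrel i0] at hlhs
  have hp0 : p ≠ 0 := by
    intro hp; rw [hp, natDegree_zero] at hdeg; omega
  have hd0 : derivative (z i0) ≠ 0 := by
    intro hder
    have := natDegree_eq_zero_of_derivative_eq_zero hder
    omega
  have hrhs : (derivative (z i0) * p).natDegree = (D - 1) + n := by
    rw [natDegree_mul hd0 hp0, hdeg,
      natDegree_eq_of_degree_eq_some (degree_derivative_eq (z i0) (by omega))]
  rw [hrhs] at hlhs
  exact ⟨i0, by omega⟩
end

section
/- Let n ≥ 5 and suppose ẋ = p(x) with deg p = n is quadratized by two new variables y(x), z(x) ∈ ℂ[x] with distinct degrees, both having zero constant and linear coefficients. Then one of y, z has degree exactly n − 1. -/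
open Polynomial

/-- A generic quadratic expression in `X`, `y`, `z`. -/
noncomputable def combo (c0 c1 c2 c3 c4 c5 c6 c7 c8 c9 : ℂ) (y z : Polynomial ℂ) :
    Polynomial ℂ :=
  C c0 * 1 + C c1 * X + C c2 * X ^ 2 + C c3 * y + C c4 * z + C c5 * (X * y) +
    C c6 * (X * z) + C c7 * (y * y) + C c8 * (y * z) + C c9 * (z * z)

lemma combo_coeff (c0 c1 c2 c3 c4 c5 c6 c7 c8 c9 : ℂ) (y z : Polynomial ℂ) (L : ℕ) :
    (combo c0 c1 c2 c3 c4 c5 c6 c7 c8 c9 y z).coeff L =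
      c0 * (1 : Polynomial ℂ).coeff L + c1 * (X : Polynomial ℂ).coeff L +
      c2 * ((X : Polynomial ℂ) ^ 2).coeff L + c3 * y.coeff L + c4 * z.coeff L +
      c5 * (X * y).coeff L + c6 * (X * z).coeff L + c7 * (y * y).coeff L +
      c8 * (y * z).coeff L + c9 * (z * z).coeff L := by
  simp only [combo, coeff_add, coeff_C_mul]

/-- Every evaluation of a quadratic `MvPolynomial` at `(X, y, z)` is a `combo`. -/
lemma rep (y z : Polynomial ℂ) (h : MvPolynomial (Fin 3) ℂ) (hd : h.totalDegree ≤ 2) :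
    ∃ c0 c1 c2 c3 c4 c5 c6 c7 c8 c9 : ℂ,
      MvPolynomial.aeval (Fin.cons X ![y, z]) h = combo c0 c1 c2 c3 c4 c5 c6 c7 c8 c9 y z := by
  classical
  set v : Fin 3 → Polynomial ℂ := Fin.cons X ![y, z] with hv
  have hv0 : v 0 = X := rfl
  have hv1 : v 1 = y := rfl
  have hv2 : v 2 = z := rfl
  set S : Polynomial ℂ → Prop := fun q =>
    ∃ c0 c1 c2 c3 c4 c5 c6 c7 c8 c9 : ℂ, q = combo c0 c1 c2 c3 c4 c5 c6 c7 c8 c9 y z with hS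
  have hadd : ∀ q1 q2, S q1 → S q2 → S (q1 + q2) := by
    rintro q1 q2 ⟨a0, a1, a2, a3, a4, a5, a6, a7, a8, a9, rfl⟩
      ⟨b0, b1, b2, b3, b4, b5, b6, b7, b8, b9, rfl⟩
    exact ⟨a0 + b0, a1 + b1, a2 + b2, a3 + b3, a4 + b4, a5 + b5, a6 + b6, a7 + b7,
      a8 + b8, a9 + b9, by simp only [combo, map_add]; ring⟩
  have hzero : S 0 :=
    ⟨0, 0, 0, 0, 0, 0, 0, 0, 0, 0, by simp [combo]⟩
  have hmain : S (MvPolynomial.aeval v h) := by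
    rw [h.as_sum, map_sum]
    refine Finset.sum_induction _ S hadd hzero ?_
    intro d hdsupp
    have hdd : d 0 + d 1 + d 2 ≤ 2 := by
      have h1 := MvPolynomial.le_totalDegree hdsupp
      have h2 : (d.sum fun _ e => e) = d 0 + d 1 + d 2 := by
        rw [Finsupp.sum_fintype]
        · exact Fin.sum_univ_three _
        · intro i; rfl
      omega
    rw [MvPolynomial.aeval_monomial]
    have hprod : (d.prod fun i e => v i ^ e) = X ^ d 0 * (y ^ d 1 * z ^ d 2) := by
      rw [Finsupp.prod_fintype]
      · rw [Fin.prod_univ_three, hv0, hv1, hv2, mul_assoc]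
      · intro i; exact pow_zero _
    rw [hprod, Polynomial.algebraMap_eq]
    set aa := MvPolynomial.coeff d h with haa
    obtain ⟨i, hi⟩ : ∃ i, d 0 = i := ⟨_, rfl⟩
    obtain ⟨j, hj⟩ : ∃ j, d 1 = j := ⟨_, rfl⟩
    obtain ⟨k, hk⟩ : ∃ k, d 2 = k := ⟨_, rfl⟩
    rw [hi, hj, hk] at hdd ⊢
    have hi2 : i ≤ 2 := by omega
    have hj2 : j ≤ 2 := by omega
    have hk2 : k ≤ 2 := by omega
    have w000 : C aa * ((X : Polynomial ℂ) ^ 0 * (y ^ 0 * z ^ 0)) =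
        combo aa 0 0 0 0 0 0 0 0 0 y z := by simp [combo]
    have w001 : C aa * ((X : Polynomial ℂ) ^ 0 * (y ^ 0 * z ^ 1)) =
        combo 0 0 0 0 aa 0 0 0 0 0 y z := by simp [combo]
    have w002 : C aa * ((X : Polynomial ℂ) ^ 0 * (y ^ 0 * z ^ 2)) =
        combo 0 0 0 0 0 0 0 0 0 aa y z := by simp [combo, sq]
    have w010 : C aa * ((X : Polynomial ℂ) ^ 1 * (y ^ 0 * z ^ 0)) =
        combo 0 aa 0 0 0 0 0 0 0 0 y z := by simp [combo]
    have w011 : C aa * ((X : Polynomial ℂ) ^ 1 * (y ^ 0 * z ^ 1)) =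
        combo 0 0 0 0 0 0 aa 0 0 0 y z := by simp [combo]
    have w020 : C aa * ((X : Polynomial ℂ) ^ 2 * (y ^ 0 * z ^ 0)) =
        combo 0 0 aa 0 0 0 0 0 0 0 y z := by simp [combo]
    have w100 : C aa * ((X : Polynomial ℂ) ^ 0 * (y ^ 1 * z ^ 0)) =
        combo 0 0 0 aa 0 0 0 0 0 0 y z := by simp [combo]
    have w101 : C aa * ((X : Polynomial ℂ) ^ 0 * (y ^ 1 * z ^ 1)) =
        combo 0 0 0 0 0 0 0 0 aa 0 y z := by simp [combo]
    have w110 : C aa * ((X : Polynomial ℂ) ^ 1 * (y ^ 1 * z ^ 0)) =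
        combo 0 0 0 0 0 aa 0 0 0 0 y z := by simp [combo]
    have w200 : C aa * ((X : Polynomial ℂ) ^ 0 * (y ^ 2 * z ^ 0)) =
        combo 0 0 0 0 0 0 0 aa 0 0 y z := by simp [combo, sq]
    simp only [hS]
    interval_cases i <;> interval_cases j <;> interval_cases k <;>
      first
      | omega
      | with_reducible exact ⟨aa, 0, 0, 0, 0, 0, 0, 0, 0, 0, w000⟩
      | with_reducible exact ⟨0, 0, 0, 0, aa, 0, 0, 0, 0, 0, w001⟩
      | with_reducible exact ⟨0, 0, 0, 0, 0, 0, 0, 0, 0, aa, w002⟩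
      | with_reducible exact ⟨0, aa, 0, 0, 0, 0, 0, 0, 0, 0, w010⟩
      | with_reducible exact ⟨0, 0, 0, 0, 0, 0, aa, 0, 0, 0, w011⟩
      | with_reducible exact ⟨0, 0, aa, 0, 0, 0, 0, 0, 0, 0, w020⟩
      | with_reducible exact ⟨0, 0, 0, aa, 0, 0, 0, 0, 0, 0, w100⟩
      | with_reducible exact ⟨0, 0, 0, 0, 0, 0, 0, 0, aa, 0, w101⟩
      | with_reducible exact ⟨0, 0, 0, 0, 0, aa, 0, 0, 0, 0, w110⟩
      | with_reducible exact ⟨0, 0, 0, 0, 0, 0, 0, aa, 0, 0, w200⟩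
  exact hmain

lemma czero (L : ℕ) {q : Polynomial ℂ} {k : ℕ} (hq : q.natDegree ≤ k) (hkL : k < L) :
    q.coeff L = 0 :=
  coeff_eq_zero_of_natDegree_lt (lt_of_le_of_lt hq hkL)

lemma eq_zero_of {u v : ℂ} (h : (0 : ℂ) = u * v) (hv : v ≠ 0) : u = 0 := by
  rcases mul_eq_zero.mp h.symm with h' | h'
  · exact h'
  · exact absurd h' hv

lemma deriv_facts (q : Polynomial ℂ) (k : ℕ) (hk : q.natDegree = k) (hk0 : k ≠ 0) :
    (derivative q).natDegree = k - 1 ∧ (derivative q).coeff (k - 1) = q.coeff k * k := by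
  obtain ⟨m, rfl⟩ : ∃ m, k = m + 1 := ⟨k - 1, by omega⟩
  have hm : m + 1 - 1 = m := rfl
  have hq0 : q ≠ 0 := by
    intro h0; rw [h0] at hk; simp at hk
  have hlcq : q.coeff (m + 1) ≠ 0 := by
    rw [← hk]; exact fun hcc => hq0 (leadingCoeff_eq_zero.mp hcc)
  have hc : (derivative q).coeff m = q.coeff (m + 1) * ((m + 1 : ℕ) : ℂ) := by
    rw [coeff_derivative]; push_cast; ring
  rw [hm]
  refine ⟨le_antisymm ((natDegree_derivative_le q).trans (by omega)) ?_, hc⟩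
  apply le_natDegree_of_ne_zero
  rw [hc]
  exact mul_ne_zero hlcq (Nat.cast_ne_zero.mpr (by omega))

lemma key (n : ℕ) (hn : 5 ≤ n) (p y z : Polynomial ℂ) (hdeg : p.natDegree = n)
    (hab : y.natDegree < z.natDegree)
    (c0 c1 c2 c3 c4 c5 c6 c7 c8 c9 : ℂ)
    (d0 d1 d2 d3 d4 d5 d6 d7 d8 d9 : ℂ)
    (e0 e1 e2 e3 e4 e5 e6 e7 e8 e9 : ℂ)
    (h1 : p = combo c0 c1 c2 c3 c4 c5 c6 c7 c8 c9 y z)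
    (h2 : derivative z * p = combo d0 d1 d2 d3 d4 d5 d6 d7 d8 d9 y z)
    (h3 : derivative y * p = combo e0 e1 e2 e3 e4 e5 e6 e7 e8 e9 y z) :
    y.natDegree = n - 1 ∨ z.natDegree = n - 1 := by
  obtain ⟨a, ha⟩ : ∃ a, y.natDegree = a := ⟨_, rfl⟩
  obtain ⟨b, hb⟩ : ∃ b, z.natDegree = b := ⟨_, rfl⟩
  rw [ha, hb] at hab
  have hp0 : p ≠ 0 := by
    intro h0; rw [h0] at hdeg; simp at hdeg; omega
  have hpdeg : p.natDegree ≤ n := hdeg.le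
  have hlcp : p.coeff n ≠ 0 := by
    rw [← hdeg]; exact fun hcc => hp0 (leadingCoeff_eq_zero.mp hcc)
  have hz0' : z ≠ 0 := by
    intro h0; rw [h0] at hb; simp at hb; omega
  have hlcz : z.coeff b ≠ 0 := by
    rw [← hb]; exact fun hcc => hz0' (leadingCoeff_eq_zero.mp hcc)
  have degy : y.natDegree ≤ a := ha.le
  have degz : z.natDegree ≤ b := hb.le
  have deg1 : (1 : Polynomial ℂ).natDegree ≤ 0 := natDegree_one.le
  have degX : (X : Polynomial ℂ).natDegree ≤ 1 := natDegree_X_le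
  have degX2 : ((X : Polynomial ℂ) ^ 2).natDegree ≤ 2 := (natDegree_X_pow 2).le
  have degXy : (X * y).natDegree ≤ 1 + a := natDegree_mul_le.trans (add_le_add degX degy)
  have degXz : (X * z).natDegree ≤ 1 + b := natDegree_mul_le.trans (add_le_add degX degz)
  have degyy : (y * y).natDegree ≤ a + a := natDegree_mul_le.trans (add_le_add degy degy)
  have degyz : (y * z).natDegree ≤ a + b := natDegree_mul_le.trans (add_le_add degy degz)
  have degzz : (z * z).natDegree ≤ b + b := natDegree_mul_le.trans (add_le_add degz degz)
  have hzz : (z * z).coeff (b + b) = z.coeff b * z.coeff b := by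
    rw [← hb]; exact coeff_mul_degree_add_degree z z
  have hyz : (y * z).coeff (a + b) = y.coeff a * z.coeff b := by
    rw [← ha, ← hb]; exact coeff_mul_degree_add_degree y z
  have hyy : (y * y).coeff (a + a) = y.coeff a * y.coeff a := by
    rw [← ha]; exact coeff_mul_degree_add_degree y y
  have hXz : (X * z).coeff (1 + b) = z.coeff b := by
    rw [← hb]
    simpa using coeff_mul_degree_add_degree X z
  have hXy : (X * y).coeff (1 + a) = y.coeff a := by
    rw [← ha]
    simpa using coeff_mul_degree_add_degree X y
  -- facts about z' * p
  have hdz := deriv_facts z b hb (by omega)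
  have hZPdeg : (derivative z * p).natDegree ≤ b - 1 + n :=
    natDegree_mul_le.trans (add_le_add hdz.1.le hpdeg)
  have hZPne : (derivative z * p).coeff (b - 1 + n) ≠ 0 := by
    have hcm := coeff_mul_degree_add_degree (derivative z) p
    rw [hdz.1, hdeg] at hcm
    rw [hcm]
    apply mul_ne_zero
    · rw [← coeff_natDegree, hdz.1, hdz.2]
      exact mul_ne_zero hlcz (Nat.cast_ne_zero.mpr (by omega))
    · exact fun hcc => hp0 (leadingCoeff_eq_zero.mp hcc)
  -- Step 1 : n - 1 ≤ b
  have hble : n - 1 ≤ b := by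
    by_contra hcon
    push_neg at hcon
    have H : (derivative z * p).coeff (b - 1 + n) =
        (combo d0 d1 d2 d3 d4 d5 d6 d7 d8 d9 y z).coeff (b - 1 + n) := by rw [h2]
    rw [combo_coeff,
        czero (b - 1 + n) deg1 (by omega), czero (b - 1 + n) degX (by omega),
        czero (b - 1 + n) degX2 (by omega), czero (b - 1 + n) degy (by omega),
        czero (b - 1 + n) degz (by omega), czero (b - 1 + n) degXy (by omega),
        czero (b - 1 + n) degXz (by omega), czero (b - 1 + n) degyy (by omega),
        czero (b - 1 + n) degyz (by omega), czero (b - 1 + n) degzz (by omega)] at H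
    simp only [mul_zero, add_zero, zero_add] at H
    exact hZPne H
  by_cases hbeq : b = n - 1
  · right; rw [hb]; exact hbeq
  by_cases hyeq : a = n - 1
  · left; rw [ha]; exact hyeq
  exfalso
  have hbn : n ≤ b := by omega
  -- d9 = 0
  have Hd9 : d9 = 0 := by
    have H : (derivative z * p).coeff (b + b) =
        (combo d0 d1 d2 d3 d4 d5 d6 d7 d8 d9 y z).coeff (b + b) := by rw [h2]
    rw [combo_coeff,
        czero (b + b) deg1 (by omega), czero (b + b) degX (by omega),
        czero (b + b) degX2 (by omega), czero (b + b) degy (by omega),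
        czero (b + b) degz (by omega), czero (b + b) degXy (by omega),
        czero (b + b) degXz (by omega), czero (b + b) degyy (by omega),
        czero (b + b) degyz (by omega), hzz, czero (b + b) hZPdeg (by omega)] at H
    simp only [mul_zero, add_zero, zero_add] at H
    exact eq_zero_of H (mul_ne_zero hlcz hlcz)
  rcases Nat.lt_or_ge a n with halt | hage
  · -- case a ≤ n - 2 : direct contradiction
    have H : (derivative z * p).coeff (b - 1 + n) =
        (combo d0 d1 d2 d3 d4 d5 d6 d7 d8 d9 y z).coeff (b - 1 + n) := by rw [h2]
    rw [combo_coeff, Hd9,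
        czero (b - 1 + n) deg1 (by omega), czero (b - 1 + n) degX (by omega),
        czero (b - 1 + n) degX2 (by omega), czero (b - 1 + n) degy (by omega),
        czero (b - 1 + n) degz (by omega), czero (b - 1 + n) degXy (by omega),
        czero (b - 1 + n) degXz (by omega), czero (b - 1 + n) degyy (by omega),
        czero (b - 1 + n) degyz (by omega)] at H
    simp only [mul_zero, zero_mul, add_zero, zero_add] at H
    exact hZPne H
  · -- case n ≤ a
    have hy0' : y ≠ 0 := by
      intro h0; rw [h0] at ha; simp at ha; omega
    have hlcy : y.coeff a ≠ 0 := by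
      rw [← ha]; exact fun hcc => hy0' (leadingCoeff_eq_zero.mp hcc)
    have hdy := deriv_facts y a ha (by omega)
    have hYPdeg : (derivative y * p).natDegree ≤ a - 1 + n :=
      natDegree_mul_le.trans (add_le_add hdy.1.le hpdeg)
    have hYPne : (derivative y * p).coeff (a - 1 + n) ≠ 0 := by
      have hcm := coeff_mul_degree_add_degree (derivative y) p
      rw [hdy.1, hdeg] at hcm
      rw [hcm]
      apply mul_ne_zero
      · rw [← coeff_natDegree, hdy.1, hdy.2]
        exact mul_ne_zero hlcy (Nat.cast_ne_zero.mpr (by omega))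
      · exact fun hcc => hp0 (leadingCoeff_eq_zero.mp hcc)
    -- d8 = 0
    have Hd8 : d8 = 0 := by
      have H : (derivative z * p).coeff (a + b) =
          (combo d0 d1 d2 d3 d4 d5 d6 d7 d8 d9 y z).coeff (a + b) := by rw [h2]
      rw [combo_coeff, Hd9,
          czero (a + b) deg1 (by omega), czero (a + b) degX (by omega),
          czero (a + b) degX2 (by omega), czero (a + b) degy (by omega),
          czero (a + b) degz (by omega), czero (a + b) degXy (by omega),
          czero (a + b) degXz (by omega), czero (a + b) degyy (by omega),
          hyz, czero (a + b) hZPdeg (by omega)] at H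
      simp only [mul_zero, zero_mul, add_zero, zero_add] at H
      exact eq_zero_of H (mul_ne_zero hlcy hlcz)
    -- the balance relation a + a = b - 1 + n
    have hrel : a + a = b - 1 + n := by
      rcases lt_trichotomy (a + a) (b - 1 + n) with h3' | h3' | h3'
      · exfalso
        have H : (derivative z * p).coeff (b - 1 + n) =
            (combo d0 d1 d2 d3 d4 d5 d6 d7 d8 d9 y z).coeff (b - 1 + n) := by rw [h2]
        rw [combo_coeff, Hd9, Hd8,
            czero (b - 1 + n) deg1 (by omega), czero (b - 1 + n) degX (by omega),
            czero (b - 1 + n) degX2 (by omega), czero (b - 1 + n) degy (by omega),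
            czero (b - 1 + n) degz (by omega), czero (b - 1 + n) degXy (by omega),
            czero (b - 1 + n) degXz (by omega), czero (b - 1 + n) degyy (by omega)] at H
        simp only [mul_zero, zero_mul, add_zero, zero_add] at H
        exact hZPne H
      · exact h3'
      · exfalso
        have Hd7 : d7 = 0 := by
          have H : (derivative z * p).coeff (a + a) =
              (combo d0 d1 d2 d3 d4 d5 d6 d7 d8 d9 y z).coeff (a + a) := by rw [h2]
          rw [combo_coeff, Hd9, Hd8,
              czero (a + a) deg1 (by omega), czero (a + a) degX (by omega),
              czero (a + a) degX2 (by omega), czero (a + a) degy (by omega),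
              czero (a + a) degz (by omega), czero (a + a) degXy (by omega),
              czero (a + a) degXz (by omega), hyy, czero (a + a) hZPdeg (by omega)] at H
          simp only [mul_zero, zero_mul, add_zero, zero_add] at H
          exact eq_zero_of H (mul_ne_zero hlcy hlcy)
        have H : (derivative z * p).coeff (b - 1 + n) =
            (combo d0 d1 d2 d3 d4 d5 d6 d7 d8 d9 y z).coeff (b - 1 + n) := by rw [h2]
        rw [combo_coeff, Hd9, Hd8, Hd7,
            czero (b - 1 + n) deg1 (by omega), czero (b - 1 + n) degX (by omega),
            czero (b - 1 + n) degX2 (by omega), czero (b - 1 + n) degy (by omega),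
            czero (b - 1 + n) degz (by omega), czero (b - 1 + n) degXy (by omega),
            czero (b - 1 + n) degXz (by omega)] at H
        simp only [mul_zero, zero_mul, add_zero, zero_add] at H
        exact hZPne H
    -- e9 = 0
    have He9 : e9 = 0 := by
      have H : (derivative y * p).coeff (b + b) =
          (combo e0 e1 e2 e3 e4 e5 e6 e7 e8 e9 y z).coeff (b + b) := by rw [h3]
      rw [combo_coeff,
          czero (b + b) deg1 (by omega), czero (b + b) degX (by omega),
          czero (b + b) degX2 (by omega), czero (b + b) degy (by omega),
          czero (b + b) degz (by omega), czero (b + b) degXy (by omega),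
          czero (b + b) degXz (by omega), czero (b + b) degyy (by omega),
          czero (b + b) degyz (by omega), hzz, czero (b + b) hYPdeg (by omega)] at H
      simp only [mul_zero, add_zero, zero_add] at H
      exact eq_zero_of H (mul_ne_zero hlcz hlcz)
    -- e8 = 0
    have He8 : e8 = 0 := by
      have H : (derivative y * p).coeff (a + b) =
          (combo e0 e1 e2 e3 e4 e5 e6 e7 e8 e9 y z).coeff (a + b) := by rw [h3]
      rw [combo_coeff, He9,
          czero (a + b) deg1 (by omega), czero (a + b) degX (by omega),
          czero (a + b) degX2 (by omega), czero (a + b) degy (by omega),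
          czero (a + b) degz (by omega), czero (a + b) degXy (by omega),
          czero (a + b) degXz (by omega), czero (a + b) degyy (by omega),
          hyz, czero (a + b) hYPdeg (by omega)] at H
      simp only [mul_zero, zero_mul, add_zero, zero_add] at H
      exact eq_zero_of H (mul_ne_zero hlcy hlcz)
    -- e7 = 0
    have He7 : e7 = 0 := by
      have H : (derivative y * p).coeff (a + a) =
          (combo e0 e1 e2 e3 e4 e5 e6 e7 e8 e9 y z).coeff (a + a) := by rw [h3]
      rw [combo_coeff, He9, He8,
          czero (a + a) deg1 (by omega), czero (a + a) degX (by omega),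
          czero (a + a) degX2 (by omega), czero (a + a) degy (by omega),
          czero (a + a) degz (by omega), czero (a + a) degXy (by omega),
          czero (a + a) degXz (by omega), hyy, czero (a + a) hYPdeg (by omega)] at H
      simp only [mul_zero, zero_mul, add_zero, zero_add] at H
      exact eq_zero_of H (mul_ne_zero hlcy hlcy)
    -- a ≥ 2n - 3
    have han2 : 2 * n ≤ a + 3 := by
      by_contra hcon
      push_neg at hcon
      have H : (derivative y * p).coeff (a - 1 + n) =
          (combo e0 e1 e2 e3 e4 e5 e6 e7 e8 e9 y z).coeff (a - 1 + n) := by rw [h3]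
      rw [combo_coeff, He9, He8, He7,
          czero (a - 1 + n) deg1 (by omega), czero (a - 1 + n) degX (by omega),
          czero (a - 1 + n) degX2 (by omega), czero (a - 1 + n) degy (by omega),
          czero (a - 1 + n) degz (by omega), czero (a - 1 + n) degXy (by omega),
          czero (a - 1 + n) degXz (by omega)] at H
      simp only [mul_zero, zero_mul, add_zero, zero_add] at H
      exact hYPne H
    -- cascade on the p-identity
    have Hc9 : c9 = 0 := by
      have H : p.coeff (b + b) =
          (combo c0 c1 c2 c3 c4 c5 c6 c7 c8 c9 y z).coeff (b + b) := by rw [← h1]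
      rw [combo_coeff,
          czero (b + b) deg1 (by omega), czero (b + b) degX (by omega),
          czero (b + b) degX2 (by omega), czero (b + b) degy (by omega),
          czero (b + b) degz (by omega), czero (b + b) degXy (by omega),
          czero (b + b) degXz (by omega), czero (b + b) degyy (by omega),
          czero (b + b) degyz (by omega), hzz, czero (b + b) hpdeg (by omega)] at H
      simp only [mul_zero, add_zero, zero_add] at H
      exact eq_zero_of H (mul_ne_zero hlcz hlcz)
    have Hc8 : c8 = 0 := by
      have H : p.coeff (a + b) =
          (combo c0 c1 c2 c3 c4 c5 c6 c7 c8 c9 y z).coeff (a + b) := by rw [← h1]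
      rw [combo_coeff, Hc9,
          czero (a + b) deg1 (by omega), czero (a + b) degX (by omega),
          czero (a + b) degX2 (by omega), czero (a + b) degy (by omega),
          czero (a + b) degz (by omega), czero (a + b) degXy (by omega),
          czero (a + b) degXz (by omega), czero (a + b) degyy (by omega),
          hyz, czero (a + b) hpdeg (by omega)] at H
      simp only [mul_zero, zero_mul, add_zero, zero_add] at H
      exact eq_zero_of H (mul_ne_zero hlcy hlcz)
    have Hc7 : c7 = 0 := by
      have H : p.coeff (a + a) =
          (combo c0 c1 c2 c3 c4 c5 c6 c7 c8 c9 y z).coeff (a + a) := by rw [← h1]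
      rw [combo_coeff, Hc9, Hc8,
          czero (a + a) deg1 (by omega), czero (a + a) degX (by omega),
          czero (a + a) degX2 (by omega), czero (a + a) degy (by omega),
          czero (a + a) degz (by omega), czero (a + a) degXy (by omega),
          czero (a + a) degXz (by omega), hyy, czero (a + a) hpdeg (by omega)] at H
      simp only [mul_zero, zero_mul, add_zero, zero_add] at H
      exact eq_zero_of H (mul_ne_zero hlcy hlcy)
    have Hc6 : c6 = 0 := by
      have H : p.coeff (1 + b) =
          (combo c0 c1 c2 c3 c4 c5 c6 c7 c8 c9 y z).coeff (1 + b) := by rw [← h1]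
      rw [combo_coeff, Hc9, Hc8, Hc7,
          czero (1 + b) deg1 (by omega), czero (1 + b) degX (by omega),
          czero (1 + b) degX2 (by omega), czero (1 + b) degy (by omega),
          czero (1 + b) degz (by omega), czero (1 + b) degXy (by omega),
          hXz, czero (1 + b) hpdeg (by omega)] at H
      simp only [mul_zero, zero_mul, add_zero, zero_add] at H
      exact eq_zero_of H hlcz
    have Hc4 : c4 = 0 := by
      have H : p.coeff b =
          (combo c0 c1 c2 c3 c4 c5 c6 c7 c8 c9 y z).coeff b := by rw [← h1]
      rw [combo_coeff, Hc9, Hc8, Hc7, Hc6,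
          czero b deg1 (by omega), czero b degX (by omega),
          czero b degX2 (by omega), czero b degy (by omega),
          czero b degXy (by omega), czero b hpdeg (by omega)] at H
      simp only [mul_zero, zero_mul, add_zero, zero_add] at H
      exact eq_zero_of H hlcz
    have Hc5 : c5 = 0 := by
      have H : p.coeff (1 + a) =
          (combo c0 c1 c2 c3 c4 c5 c6 c7 c8 c9 y z).coeff (1 + a) := by rw [← h1]
      rw [combo_coeff, Hc9, Hc8, Hc7, Hc6, Hc4,
          czero (1 + a) deg1 (by omega), czero (1 + a) degX (by omega),
          czero (1 + a) degX2 (by omega), czero (1 + a) degy (by omega),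
          hXy, czero (1 + a) hpdeg (by omega)] at H
      simp only [mul_zero, zero_mul, add_zero, zero_add] at H
      exact eq_zero_of H hlcy
    have Hc3 : c3 = 0 := by
      have H : p.coeff a =
          (combo c0 c1 c2 c3 c4 c5 c6 c7 c8 c9 y z).coeff a := by rw [← h1]
      rw [combo_coeff, Hc9, Hc8, Hc7, Hc6, Hc5, Hc4,
          czero a deg1 (by omega), czero a degX (by omega),
          czero a degX2 (by omega), czero a hpdeg (by omega)] at H
      simp only [mul_zero, zero_mul, add_zero, zero_add] at H
      exact eq_zero_of H hlcy
    have H : p.coeff n =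
        (combo c0 c1 c2 c3 c4 c5 c6 c7 c8 c9 y z).coeff n := by rw [← h1]
    rw [combo_coeff, Hc9, Hc8, Hc7, Hc6, Hc5, Hc4, Hc3,
        czero n deg1 (by omega), czero n degX (by omega),
        czero n degX2 (by omega)] at H
    simp only [mul_zero, zero_mul, add_zero, zero_add] at H
    exact hlcp H

theorem stmt14 (n : ℕ) (hn : 5 ≤ n) (p : Polynomial ℂ) (hdeg : p.natDegree = n)
    (y z : Polynomial ℂ) (hne : y.natDegree ≠ z.natDegree)
    (hy0 : y.coeff 0 = 0) (hy1 : y.coeff 1 = 0)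
    (hz0 : z.coeff 0 = 0) (hz1 : z.coeff 1 = 0)
    (hquad : Quadratizes p ![y, z]) :
    y.natDegree = n - 1 ∨ z.natDegree = n - 1 := by
  obtain ⟨h, hd2, hA, hB⟩ := hquad
  have hBy := hB 0
  have hBz := hB 1
  simp only [Matrix.cons_val_zero, Matrix.cons_val_one, Matrix.head_cons] at hBy hBz
  rcases lt_or_gt_of_ne hne with hlt | hgt
  · obtain ⟨c0, c1, c2, c3, c4, c5, c6, c7, c8, c9, hc⟩ := rep y z (h 0) (hd2 0)
    obtain ⟨e0, e1, e2, e3, e4, e5, e6, e7, e8, e9, he⟩ :=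
      rep y z (h (Fin.succ (0 : Fin 2))) (hd2 _)
    obtain ⟨d0, d1, d2, d3, d4, d5, d6, d7, d8, d9, hd⟩ :=
      rep y z (h (Fin.succ (1 : Fin 2))) (hd2 _)
    rw [hA] at hc
    rw [hBy] at he
    rw [hBz] at hd
    exact key n hn p y z hdeg hlt c0 c1 c2 c3 c4 c5 c6 c7 c8 c9
      d0 d1 d2 d3 d4 d5 d6 d7 d8 d9 e0 e1 e2 e3 e4 e5 e6 e7 e8 e9 hc hd he
  · -- swap the roles of y and z via renaming of variables
    have hcomp : (Fin.cons X ![z, y] : Fin 3 → Polynomial ℂ) ∘ (![0, 2, 1] : Fin 3 → Fin 3) =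
        Fin.cons X ![y, z] := by
      funext i
      fin_cases i <;> rfl
    have rep' : ∀ q : MvPolynomial (Fin 3) ℂ, q.totalDegree ≤ 2 →
        ∃ c0 c1 c2 c3 c4 c5 c6 c7 c8 c9 : ℂ,
          MvPolynomial.aeval (Fin.cons X ![y, z]) q =
            combo c0 c1 c2 c3 c4 c5 c6 c7 c8 c9 z y := by
      intro q hq
      obtain ⟨c0, c1, c2, c3, c4, c5, c6, c7, c8, c9, hc⟩ :=
        rep z y (MvPolynomial.rename (![0, 2, 1] : Fin 3 → Fin 3) q)
          ((MvPolynomial.totalDegree_rename_le _ _).trans hq)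
      rw [MvPolynomial.aeval_rename, hcomp] at hc
      exact ⟨c0, c1, c2, c3, c4, c5, c6, c7, c8, c9, hc⟩
    obtain ⟨c0, c1, c2, c3, c4, c5, c6, c7, c8, c9, hc⟩ := rep' (h 0) (hd2 0)
    obtain ⟨e0, e1, e2, e3, e4, e5, e6, e7, e8, e9, he⟩ :=
      rep' (h (Fin.succ (0 : Fin 2))) (hd2 _)
    obtain ⟨d0, d1, d2, d3, d4, d5, d6, d7, d8, d9, hd⟩ :=
      rep' (h (Fin.succ (1 : Fin 2))) (hd2 _)
    rw [hA] at hc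
    rw [hBy] at he
    rw [hBz] at hd
    exact (key n hn p z y hdeg hgt c0 c1 c2 c3 c4 c5 c6 c7 c8 c9
      e0 e1 e2 e3 e4 e5 e6 e7 e8 e9 d0 d1 d2 d3 d4 d5 d6 d7 d8 d9 hc he hd).symm
end

section
/- Let q₀, q₁, q₂, q₃, q₄ ∈ ℂ and consider the ODE ẏ = y⁶ + q₄y⁴ + q₃y³ + q₂y² + q₁y + q₀. Then the two new variables z₁ := y⁵ + (5q₃/8)y² and z₂ := y³ quadratize this ODE; i.e., each of p(y), z₁'(y)p(y), z₂'(y)p(y) can be written as a polynomial of total degree at most 2 in y, z₁, z₂ evaluated at z₁ = z₁(y), z₂ = z₂(y). -/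
set_option maxHeartbeats 2000000
open Polynomial

private lemma td_mul2 (a : ℂ) (i j : Fin 3) :
    (MvPolynomial.C a * MvPolynomial.X i * MvPolynomial.X j :
      MvPolynomial (Fin 3) ℂ).totalDegree ≤ 2 := by
  refine (MvPolynomial.totalDegree_mul _ _).trans ?_
  have h1 := MvPolynomial.totalDegree_mul (MvPolynomial.C a) (MvPolynomial.X i : MvPolynomial (Fin 3) ℂ)
  simp [MvPolynomial.totalDegree_X, MvPolynomial.totalDegree_C] at h1 ⊢
  omega

private lemma td_mul1 (a : ℂ) (i : Fin 3) :
    (MvPolynomial.C a * MvPolynomial.X i :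
      MvPolynomial (Fin 3) ℂ).totalDegree ≤ 2 := by
  refine (MvPolynomial.totalDegree_mul _ _).trans ?_
  simp [MvPolynomial.totalDegree_X, MvPolynomial.totalDegree_C]

private lemma td_c (a : ℂ) :
    (MvPolynomial.C a : MvPolynomial (Fin 3) ℂ).totalDegree ≤ 2 := by
  simp [MvPolynomial.totalDegree_C]

private lemma cons_two {α : Type*} (a : α) (v : Fin 2 → α) : (Fin.cons a v : Fin 3 → α) 2 = v 1 := rfl

theorem stmt15 (q₄ q₃ q₂ q₁ q₀ : ℂ) :
    Quadratizes
      (X ^ 6 + C q₄ * X ^ 4 + C q₃ * X ^ 3 + C q₂ * X ^ 2 + C q₁ * X + C q₀)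
      ![X ^ 5 + C (5 * q₃ / 8) * X ^ 2, X ^ 3] := by
  refine ⟨![
    MvPolynomial.C 1 * MvPolynomial.X 1 * MvPolynomial.X 0
      + MvPolynomial.C (3*q₃/8) * MvPolynomial.X 2
      + MvPolynomial.C q₄ * MvPolynomial.X 2 * MvPolynomial.X 0
      + MvPolynomial.C q₂ * MvPolynomial.X 0 * MvPolynomial.X 0
      + MvPolynomial.C q₁ * MvPolynomial.X 0 + MvPolynomial.C q₀,
    MvPolynomial.C 5 * MvPolynomial.X 1 * MvPolynomial.X 1
      + MvPolynomial.C (5*q₁ - 15*q₃*q₄/8) * MvPolynomial.X 1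
      + MvPolynomial.C (5*q₂) * MvPolynomial.X 1 * MvPolynomial.X 0
      + MvPolynomial.C (-(15*q₂*q₃/8)) * MvPolynomial.X 2
      + MvPolynomial.C (5*q₀ - 45*q₃^2/64) * MvPolynomial.X 2 * MvPolynomial.X 0
      + MvPolynomial.C (5*q₄) * MvPolynomial.X 1 * MvPolynomial.X 2
      + MvPolynomial.C ((75*q₃^2*q₄ - 120*q₁*q₃)/64) * MvPolynomial.X 0 * MvPolynomial.X 0
      + MvPolynomial.C (5*q₀*q₃/4) * MvPolynomial.X 0,
    MvPolynomial.C 3 * MvPolynomial.X 1 * MvPolynomial.X 2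
      + MvPolynomial.C (9*q₃/8) * MvPolynomial.X 1
      + MvPolynomial.C (3*q₄) * MvPolynomial.X 1 * MvPolynomial.X 0
      + MvPolynomial.C (3*q₁ - 15*q₃*q₄/8) * MvPolynomial.X 2
      + MvPolynomial.C (3*q₂) * MvPolynomial.X 2 * MvPolynomial.X 0
      + MvPolynomial.C (3*q₀ - 45*q₃^2/64) * MvPolynomial.X 0 * MvPolynomial.X 0],
    ?_, ?_, ?_⟩
  · intro i
    fin_cases i <;>
      simp only [Matrix.cons_val_zero, Matrix.cons_val_one, Matrix.head_cons,
        Matrix.cons_val_two, Matrix.tail_cons] <;>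
      (repeat' refine (MvPolynomial.totalDegree_add _ _).trans (max_le ?_ ?_)) <;>
      first
        | with_reducible exact td_mul2 _ _ _
        | with_reducible exact td_mul1 _ _
        | with_reducible exact td_c _
  · apply Polynomial.funext
    intro x
    simp [Fin.cons_zero, Fin.cons_succ, cons_two]
    ring
  · intro i
    apply Polynomial.funext
    intro x
    fin_cases i <;>
      simp [Fin.cons_zero, Fin.cons_succ, cons_two, derivative_pow] <;> ring
end

section
/- Every degree-6 scalar polynomial ODE ẋ = p₆x⁶ + p₅x⁵ + p₄x⁴ + p₃x³ + p₂x² + p₁x + p₀ with p₆ ≠ 0 is quadratized by the three monomial new variables z₁ := x⁵, z₂ := x⁴, z₃ := x³. -/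
open Polynomial

namespace Stmt16Aux
open MvPolynomial

noncomputable def H (p₆ p₅ p₄ p₃ p₂ p₁ p₀ : ℂ) : Fin 4 → MvPolynomial (Fin 4) ℂ :=
  ![MvPolynomial.C p₆ * (X 1 * X 0) + MvPolynomial.C p₅ * X 1 + MvPolynomial.C p₄ * X 2 + MvPolynomial.C p₃ * X 3
      + MvPolynomial.C p₂ * (X 0 * X 0) + MvPolynomial.C p₁ * X 0 + MvPolynomial.C p₀,
    MvPolynomial.C (5*p₆) * (X 1 * X 1) + MvPolynomial.C (5*p₅) * (X 1 * X 2) + MvPolynomial.C (5*p₄) * (X 2 * X 2)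
      + MvPolynomial.C (5*p₃) * (X 2 * X 3) + MvPolynomial.C (5*p₂) * (X 3 * X 3) + MvPolynomial.C (5*p₁) * X 1 + MvPolynomial.C (5*p₀) * X 2,
    MvPolynomial.C (4*p₆) * (X 1 * X 2) + MvPolynomial.C (4*p₅) * (X 2 * X 2) + MvPolynomial.C (4*p₄) * (X 2 * X 3)
      + MvPolynomial.C (4*p₃) * (X 3 * X 3) + MvPolynomial.C (4*p₂) * X 1 + MvPolynomial.C (4*p₁) * X 2 + MvPolynomial.C (4*p₀) * X 3,
    MvPolynomial.C (3*p₆) * (X 2 * X 2) + MvPolynomial.C (3*p₅) * (X 2 * X 3) + MvPolynomial.C (3*p₄) * (X 3 * X 3)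
      + MvPolynomial.C (3*p₃) * X 1 + MvPolynomial.C (3*p₂) * X 2 + MvPolynomial.C (3*p₁) * X 3 + MvPolynomial.C (3*p₀) * (X 0 * X 0)]

lemma td_mul2 (a : ℂ) (i j : Fin 4) :
    (MvPolynomial.C a * (X i * X j) : MvPolynomial (Fin 4) ℂ).totalDegree ≤ 2 := by
  refine (totalDegree_mul _ _).trans ?_
  have h := (totalDegree_mul (X i) (X j) : (X i * X j : MvPolynomial (Fin 4) ℂ).totalDegree ≤ _)
  simp only [totalDegree_X, totalDegree_C, zero_add] at h ⊢
  omega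

lemma td_mul1 (a : ℂ) (i : Fin 4) :
    (MvPolynomial.C a * X i : MvPolynomial (Fin 4) ℂ).totalDegree ≤ 2 := by
  refine (totalDegree_mul _ _).trans ?_
  simp [totalDegree_X, totalDegree_C]

lemma td_add {p q : MvPolynomial (Fin 4) ℂ} (hp : p.totalDegree ≤ 2) (hq : q.totalDegree ≤ 2) :
    (p + q).totalDegree ≤ 2 :=
  (totalDegree_add _ _).trans (max_le hp hq)

set_option maxHeartbeats 2000000 in
lemma H_deg (p₆ p₅ p₄ p₃ p₂ p₁ p₀ : ℂ) (i : Fin 4) :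
    (H p₆ p₅ p₄ p₃ p₂ p₁ p₀ i).totalDegree ≤ 2 := by
  fin_cases i <;>
    simp only [H, Matrix.cons_val_zero, Matrix.cons_val_one, Matrix.head_cons,
      Matrix.cons_val_two, Matrix.tail_cons, Matrix.cons_val_three] <;>
    refine td_add (td_add (td_add (td_add (td_add (td_add ?_ ?_) ?_) ?_) ?_) ?_) ?_ <;>
    first
      | with_reducible exact td_mul2 _ _ _
      | with_reducible exact td_mul1 _ _
      | exact le_of_eq_of_le (totalDegree_C _) (by norm_num)

end Stmt16Aux

theorem stmt16 (p₆ p₅ p₄ p₃ p₂ p₁ p₀ : ℂ) (h6 : p₆ ≠ 0) :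
    Quadratizes
      (C p₆ * X ^ 6 + C p₅ * X ^ 5 + C p₄ * X ^ 4 + C p₃ * X ^ 3 + C p₂ * X ^ 2 +
        C p₁ * X + C p₀)
      ![X ^ 5, X ^ 4, X ^ 3] := by
  refine ⟨Stmt16Aux.H p₆ p₅ p₄ p₃ p₂ p₁ p₀, Stmt16Aux.H_deg _ _ _ _ _ _ _, ?_, ?_⟩
  · have hv : (Fin.cons X ![X ^ 5, X ^ 4, X ^ 3] : Fin 4 → Polynomial ℂ)
        = ![X, X ^ 5, X ^ 4, X ^ 3] := by
      ext i; fin_cases i <;> rfl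
    simp only [Stmt16Aux.H, hv, Matrix.cons_val_zero, map_add, map_mul,
      MvPolynomial.aeval_C, MvPolynomial.aeval_X, Matrix.cons_val_one, Matrix.head_cons,
      Matrix.cons_val_two, Matrix.tail_cons, Matrix.cons_val_three, algebraMap_eq]
    ring
  · have hv : (Fin.cons X ![X ^ 5, X ^ 4, X ^ 3] : Fin 4 → Polynomial ℂ)
        = ![X, X ^ 5, X ^ 4, X ^ 3] := by
      ext i; fin_cases i <;> rfl
    intro i
    fin_cases i <;>
      · simp only [Stmt16Aux.H, hv, Fin.succ, Matrix.cons_val_zero, map_add, map_mul,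
          MvPolynomial.aeval_C, MvPolynomial.aeval_X, Matrix.cons_val_one, Matrix.head_cons,
          Matrix.cons_val_two, Matrix.tail_cons, Matrix.cons_val_three, algebraMap_eq,
          derivative_X_pow, Matrix.cons_val', Matrix.cons_val_fin_one, Matrix.empty_val']
        simp [C_eq_natCast]
        simp only [map_ofNat]
        ring
end

section
/- There exists a degree-6 scalar polynomial ODE ẋ = p₆x⁶ + p₄x⁴ + p₃x³ + p₂x² + p₁x + p₀ with all of p₆, p₄, p₃, p₂, p₁, p₀ nonzero that cannot be quadratized by any pair of monomial new variables z₁ = x^{d₁}, z₂ = x^{d₂} with d₁, d₂ ≥ 2. In fact, no such ODE can be quadratized by two monomial new variables. -/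
open Polynomial

/-- The set of exponents realizable by a product of at most two elements of
`{1, x, x^{d₁}, x^{d₂}}`. -/
def goodExp (d₁ d₂ n : ℕ) : Prop :=
  n = 0 ∨ n = 1 ∨ n = 2 ∨ n = d₁ ∨ n = d₂ ∨ n = d₁+1 ∨ n = d₂+1 ∨
  n = 2*d₁ ∨ n = 2*d₂ ∨ n = d₁+d₂

lemma aeval_monomial_pow (d₁ d₂ : ℕ) (u : Fin 3 →₀ ℕ) (c : ℂ) :
    MvPolynomial.aeval (Fin.cons X ![X ^ d₁, X ^ d₂] : Fin 3 → ℂ[X]) (MvPolynomial.monomial u c)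
      = C c * X ^ (u 0 + u 1 * d₁ + u 2 * d₂) := by
  have e0 : (Fin.cons X ![X ^ d₁, X ^ d₂] : Fin 3 → ℂ[X]) 0 = X := rfl
  have e1 : (Fin.cons X ![X ^ d₁, X ^ d₂] : Fin 3 → ℂ[X]) 1 = X ^ d₁ := rfl
  have e2 : (Fin.cons X ![X ^ d₁, X ^ d₂] : Fin 3 → ℂ[X]) 2 = X ^ d₂ := rfl
  rw [MvPolynomial.aeval_monomial, Finsupp.prod_pow, Fin.prod_univ_three,
    e0, e1, e2, ← pow_mul, ← pow_mul, ← pow_add, ← pow_add]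
  rw [show (algebraMap ℂ ℂ[X]) c = C c from rfl]
  congr 1
  ring

lemma coeff_aeval_eq_zero (d₁ d₂ : ℕ) (h : MvPolynomial (Fin 3) ℂ)
    (hdeg : h.totalDegree ≤ 2) (n : ℕ) (hn : ¬ goodExp d₁ d₂ n) :
    (MvPolynomial.aeval (Fin.cons X ![X ^ d₁, X ^ d₂] : Fin 3 → ℂ[X]) h).coeff n = 0 := by
  conv_lhs => rw [h.as_sum]
  rw [map_sum, finset_sum_coeff]
  apply Finset.sum_eq_zero
  intro v hv
  rw [aeval_monomial_pow, coeff_C_mul, coeff_X_pow]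
  have hsum : v 0 + v 1 + v 2 ≤ 2 := by
    have h1 := MvPolynomial.le_totalDegree hv
    have h2 : (v.sum fun _ e => e) = v 0 + v 1 + v 2 := by
      rw [Finsupp.sum_fintype _ _ (fun _ => rfl), Fin.sum_univ_three]
    omega
  split_ifs with he
  · exfalso
    apply hn
    subst he
    set a := v 0 with ha
    set b := v 1 with hb
    set c2 := v 2 with hc
    clear_value a b c2
    have hb2 : b ≤ 2 := by omega
    have hc2 : c2 ≤ 2 := by omega
    unfold goodExp
    interval_cases b <;> interval_cases c2 <;> omega
  · simp

lemma main_lemma (p₆ p₄ p₃ p₂ p₁ p₀ : ℂ) (h6 : p₆ ≠ 0) (h4 : p₄ ≠ 0) (h3 : p₃ ≠ 0)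
    (d₁ d₂ : ℕ) (hd₁ : 2 ≤ d₁) (hd₂ : 2 ≤ d₂) :
    ¬ Quadratizes
        (C p₆ * X ^ 6 + C p₄ * X ^ 4 + C p₃ * X ^ 3 + C p₂ * X ^ 2 + C p₁ * X + C p₀)
        ![X ^ d₁, X ^ d₂] := by
  set p : ℂ[X] := C p₆ * X ^ 6 + C p₄ * X ^ 4 + C p₃ * X ^ 3 + C p₂ * X ^ 2 + C p₁ * X + C p₀
    with hpdef
  rintro ⟨h, hdeg, -, hz⟩
  have hc3 : p.coeff 3 = p₃ := by
    simp [hpdef, coeff_add, coeff_C_mul, coeff_X_pow, coeff_C, coeff_X]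
  have hc4 : p.coeff 4 = p₄ := by
    simp [hpdef, coeff_add, coeff_C_mul, coeff_X_pow, coeff_C, coeff_X]
  have hc6 : p.coeff 6 = p₆ := by
    simp [hpdef, coeff_add, coeff_C_mul, coeff_X_pow, coeff_C, coeff_X]
  have freq : ∀ d : ℕ, 2 ≤ d → ∀ k : ℕ, 3 ≤ k → p.coeff k ≠ 0 →
      ∀ g : MvPolynomial (Fin 3) ℂ, g.totalDegree ≤ 2 →
      MvPolynomial.aeval (Fin.cons X ![X ^ d₁, X ^ d₂] : Fin 3 → ℂ[X]) g
        = derivative ((X : ℂ[X]) ^ d) * p →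
      goodExp d₁ d₂ (d - 1 + k) := by
    intro d hd k hk hpk g hgdeg hgev
    by_contra hbad
    have h0 := coeff_aeval_eq_zero d₁ d₂ g hgdeg _ hbad
    rw [hgev, derivative_X_pow, mul_assoc, coeff_C_mul,
      show d - 1 + k = k + (d - 1) by omega, coeff_X_pow_mul] at h0
    rcases mul_eq_zero.mp h0 with hcast | hzero
    · exact Nat.cast_ne_zero.mpr (by omega : d ≠ 0) hcast
    · exact hpk hzero
  have hz1 : MvPolynomial.aeval (Fin.cons X ![X ^ d₁, X ^ d₂] : Fin 3 → ℂ[X]) (h (0 : Fin 2).succ)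
      = derivative ((X : ℂ[X]) ^ d₁) * p := by
    simpa using hz 0
  have hz2 : MvPolynomial.aeval (Fin.cons X ![X ^ d₁, X ^ d₂] : Fin 3 → ℂ[X]) (h (1 : Fin 2).succ)
      = derivative ((X : ℂ[X]) ^ d₂) * p := by
    simpa using hz 1
  have ga := freq d₁ hd₁ 3 (by norm_num) (by rw [hc3]; exact h3) _ (hdeg _) hz1
  have gb := freq d₁ hd₁ 4 (by norm_num) (by rw [hc4]; exact h4) _ (hdeg _) hz1
  have gc := freq d₁ hd₁ 6 (by norm_num) (by rw [hc6]; exact h6) _ (hdeg _) hz1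
  have gd := freq d₂ hd₂ 3 (by norm_num) (by rw [hc3]; exact h3) _ (hdeg _) hz2
  have ge := freq d₂ hd₂ 4 (by norm_num) (by rw [hc4]; exact h4) _ (hdeg _) hz2
  have gf := freq d₂ hd₂ 6 (by norm_num) (by rw [hc6]; exact h6) _ (hdeg _) hz2
  unfold goodExp at ga gb gc gd ge gf
  omega

theorem stmt17 :
    (∃ p₆ p₄ p₃ p₂ p₁ p₀ : ℂ, p₆ ≠ 0 ∧ p₄ ≠ 0 ∧ p₃ ≠ 0 ∧ p₂ ≠ 0 ∧ p₁ ≠ 0 ∧ p₀ ≠ 0 ∧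
      ∀ d₁ d₂ : ℕ, 2 ≤ d₁ → 2 ≤ d₂ →
        ¬ Quadratizes
            (C p₆ * X ^ 6 + C p₄ * X ^ 4 + C p₃ * X ^ 3 + C p₂ * X ^ 2 + C p₁ * X + C p₀)
            ![X ^ d₁, X ^ d₂]) ∧
    (∀ p₆ p₄ p₃ p₂ p₁ p₀ : ℂ, p₆ ≠ 0 → p₄ ≠ 0 → p₃ ≠ 0 → p₂ ≠ 0 → p₁ ≠ 0 → p₀ ≠ 0 →
      ∀ d₁ d₂ : ℕ, 2 ≤ d₁ → 2 ≤ d₂ →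
        ¬ Quadratizes
            (C p₆ * X ^ 6 + C p₄ * X ^ 4 + C p₃ * X ^ 3 + C p₂ * X ^ 2 + C p₁ * X + C p₀)
            ![X ^ d₁, X ^ d₂]) := by
  constructor
  · exact ⟨1, 1, 1, 1, 1, 1, one_ne_zero, one_ne_zero, one_ne_zero, one_ne_zero, one_ne_zero,
      one_ne_zero, fun d₁ d₂ hd₁ hd₂ =>
        main_lemma 1 1 1 1 1 1 one_ne_zero one_ne_zero one_ne_zero d₁ d₂ hd₁ hd₂⟩
  · intro p₆ p₄ p₃ p₂ p₁ p₀ h6 h4 h3 _ _ _ d₁ d₂ hd₁ hd₂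
    exact main_lemma p₆ p₄ p₃ p₂ p₁ p₀ h6 h4 h3 d₁ d₂ hd₁ hd₂
end

section
/- Let n ≥ 6 be even, and suppose the ODE ẋ = xⁿ + q(x) with deg q < n is quadratized by a single new variable z(x) = αx^{n/2} + r(x) with α ≠ 0 and deg r < n/2 and deg z ≥ 3. Then a contradiction arises: z'(x)·(xⁿ + q(x)) has degree (3n−2)/2, which exceeds 2·deg z = n, the maximal degree of any quadratic polynomial in x and z. Hence no quadratizing single new variable of degree n/2 exists. -/
open Polynomial

theorem stmt18 (n : ℕ) (hn : 6 ≤ n) (heven : Even n) (q : Polynomial ℂ)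
    (hq : q.degree < n) (α : ℂ) (hα : α ≠ 0) (r : Polynomial ℂ)
    (hr : r.degree < (n / 2 : ℕ)) (z : Polynomial ℂ)
    (hz : z = C α * X ^ (n / 2) + r) (hz3 : 3 ≤ z.natDegree)
    (hquad : Quadratizes (X ^ n + q) ![z]) :
    False := by
  obtain ⟨h, hdeg, _, hsucc⟩ := hquad
  set p : Polynomial ℂ := X ^ n + q with hp
  have hk : n / 2 * 2 = n := Nat.div_mul_cancel heven.two_dvd
  -- degree of p is n
  have hdp : p.degree = n := by
    rw [hp, degree_add_eq_left_of_degree_lt (by simpa using hq), degree_X_pow]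
  have hpn0 : p ≠ 0 := fun h0 => by simp [h0] at hdp
  have hpnat : p.natDegree = n := natDegree_eq_of_degree_eq_some hdp
  -- z has natDegree ≤ n/2
  have hznat : z.natDegree ≤ n / 2 := by
    rw [hz]
    refine natDegree_add_le_of_degree_le ?_ ?_
    · exact (natDegree_C_mul_le _ _).trans (by simp)
    · exact natDegree_le_of_degree_le hr.le
  -- derivative z degree
  have hz0 : 0 < z.natDegree := by omega
  have hdz : (derivative z).degree = ((z.natDegree - 1 : ℕ) : WithBot ℕ) :=
    degree_derivative_eq z hz0
  have hdz0 : derivative z ≠ 0 := fun h0 => by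
    rw [h0, degree_zero] at hdz; exact (by simp at hdz)
  have hdznat : (derivative z).natDegree = z.natDegree - 1 :=
    natDegree_eq_of_degree_eq_some hdz
  -- natDegree of z' * p
  have hmul : (derivative z * p).natDegree = z.natDegree - 1 + n := by
    rw [natDegree_mul hdz0 hpn0, hdznat, hpnat]
  -- bound from quadratization
  have hb : (derivative z * p).natDegree ≤ n := by
    have hs := hsucc 0; simp only [Matrix.cons_val_zero] at hs; rw [← hs]
    have := MvPolynomial.aeval_natDegree_le (h (0 : Fin 1).succ) (hdeg _)
      (Fin.cons X ![z]) (n := n / 2) ?_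
    · exact this.trans (by omega)
    · intro i
      refine Fin.cases ?_ ?_ i
      · simpa using by omega
      · intro j
        fin_cases j
        simpa using hznat
  omega
end

section
/- Let n ≥ 3 and suppose the ODE ẋ = aₙxⁿ + q(x), aₙ ≠ 0, deg q < n, is quadratized by a single new variable z with deg z = n. Then a contradiction arises: deg(z'·p) = 2n − 1, but deg z² = 2n > 2n − 1 and every other quadratic monomial in x and z has degree at most n + 1 < 2n − 1. Hence no quadratizing single new variable of degree n exists. -/
open Polynomial

lemma aux_coeff (z : Polynomial ℂ) (n : ℕ) (hn : 3 ≤ n) (hz : z.natDegree = n)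
    (h : MvPolynomial (Fin 2) ℂ) (hh : h.totalDegree ≤ 2) (k : ℕ) (hk : n + 2 ≤ k) :
    (MvPolynomial.aeval (Fin.cons X ![z]) h).coeff k
      = MvPolynomial.coeff (Finsupp.single 1 2) h * (z ^ 2).coeff k := by
  have hev : (MvPolynomial.aeval (Fin.cons X ![z]) h : Polynomial ℂ)
      = ∑ d ∈ h.support, C (h.coeff d) * ∏ i, (Fin.cons X ![z] : Fin 2 → Polynomial ℂ) i ^ d i := by
    rw [MvPolynomial.aeval_def, MvPolynomial.eval₂_eq', Polynomial.algebraMap_eq]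
  rw [hev, Polynomial.finset_sum_coeff]
  rw [Finset.sum_eq_single (Finsupp.single 1 2)]
  · by_cases hmem : (Finsupp.single 1 2 : Fin 2 →₀ ℕ) ∈ h.support
    · simp [Fin.prod_univ_two, Finsupp.single_eq_of_ne (show (1:Fin 2) ≠ 0 by decide),
        Polynomial.coeff_C_mul, sq]
    · rw [MvPolynomial.notMem_support_iff] at hmem
      simp [hmem]
  · intro d hd hne
    -- other monomials have small degree
    have hsum : d 0 + d 1 ≤ 2 := by
      have := MvPolynomial.le_totalDegree hd
      have hds : d.sum (fun _ e => e) = d 0 + d 1 := by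
        rw [Finsupp.sum_fintype]
        · exact Fin.sum_univ_two _
        · intro; rfl
      omega
    have hd1 : d 1 ≤ 1 := by
      by_contra hcon
      push_neg at hcon
      apply hne
      have h1 : d 1 = 2 := by omega
      have h0 : d 0 = 0 := by omega
      ext i
      fin_cases i <;> simp [h0, h1, Finsupp.single_eq_of_ne (show (1:Fin 2) ≠ 0 by decide)]
    have hprod : (∏ i, (Fin.cons X ![z] : Fin 2 → Polynomial ℂ) i ^ d i)
        = X ^ d 0 * z ^ d 1 := by
      simp [Fin.prod_univ_two]
    rw [hprod]
    apply Polynomial.coeff_eq_zero_of_natDegree_lt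
    calc (C (h.coeff d) * (X ^ d 0 * z ^ d 1)).natDegree
        ≤ (C (h.coeff d)).natDegree + (X ^ d 0 * z ^ d 1).natDegree := natDegree_mul_le
      _ ≤ 0 + ((X ^ d 0 : Polynomial ℂ).natDegree + (z ^ d 1).natDegree) := by
          gcongr
          · simp
          · exact natDegree_mul_le
      _ ≤ d 0 + d 1 * n := by
          simp only [zero_add]
          gcongr
          · exact (natDegree_X_pow _).le
          · exact (natDegree_pow _ _).le.trans (by rw [hz])
      _ < k := by interval_cases h1 : d 1 <;> omega
  · intro hnmem
    rw [MvPolynomial.notMem_support_iff] at hnmem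
    simp [hnmem]

theorem stmt19 (n : ℕ) (hn : 3 ≤ n) (an : ℂ) (han : an ≠ 0) (q : Polynomial ℂ)
    (hq : q.degree < n) (z : Polynomial ℂ) (hz : z.natDegree = n)
    (hquad : Quadratizes (C an * X ^ n + q) ![z]) :
    False := by
  obtain ⟨h, hdeg, -, h2⟩ := hquad
  set p : Polynomial ℂ := C an * X ^ n + q with hp
  have hzne : z ≠ 0 := by
    intro h0
    rw [h0, natDegree_zero] at hz
    omega
  have hlz : z.coeff n ≠ 0 := by
    rw [← hz]
    exact mt leadingCoeff_eq_zero.mp hzne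
  -- degree facts about p
  have hdegXn : (C an * X ^ n : Polynomial ℂ).degree = n := by
    rw [degree_C_mul_X_pow n han]
  have hpdeg : p.degree = n := by
    rw [hp, degree_add_eq_left_of_degree_lt (by rw [hdegXn]; exact hq), hdegXn]
  have hpnat : p.natDegree = n := natDegree_eq_of_degree_eq_some hpdeg
  have hpc : p.coeff n = an := by
    rw [hp, Polynomial.coeff_add, Polynomial.coeff_C_mul, Polynomial.coeff_X_pow,
      Polynomial.coeff_eq_zero_of_degree_lt hq]
    simp
  have key := h2 0
  have hzz : (![z] : Fin 1 → Polynomial ℂ) 0 = z := rfl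
  rw [hzz] at key
  have hsucc : ((0 : Fin 1).succ : Fin 2) = 1 := rfl
  rw [hsucc] at key
  set c : ℂ := MvPolynomial.coeff (Finsupp.single 1 2) (h 1) with hc
  have hdz : (derivative z).natDegree ≤ n - 1 := by
    rw [← hz]; exact natDegree_derivative_le z
  have hmul : (derivative z * p).natDegree ≤ 2 * n - 1 := by
    refine natDegree_mul_le.trans ?_
    rw [hpnat]; omega
  -- coefficient at 2n
  have e1 := aux_coeff z n hn hz (h 1) (hdeg 1) (2 * n) (by omega)
  rw [key] at e1
  have hz2 : (z ^ 2).coeff (2 * n) = z.coeff n * z.coeff n := by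
    have := coeff_mul_add_eq_of_natDegree_le (f := z) (g := z) (df := n) (dg := n) hz.le hz.le
    rw [sq]
    rw [show 2 * n = n + n by ring]
    exact this
  have hc0 : c = 0 := by
    have hl : (derivative z * p).coeff (2 * n) = 0 :=
      Polynomial.coeff_eq_zero_of_natDegree_lt (by omega)
    rw [hl, hz2] at e1
    rcases mul_eq_zero.mp e1.symm with h' | h'
    · exact h'
    · exact absurd h' (mul_ne_zero hlz hlz)
  -- coefficient at 2n - 1
  have e2 := aux_coeff z n hn hz (h 1) (hdeg 1) (2 * n - 1) (by omega)
  rw [key, ← hc, hc0, zero_mul] at e2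
  have hlhs : (derivative z * p).coeff (2 * n - 1) = (n : ℂ) * z.coeff n * an := by
    have h1 : (derivative z * p).coeff ((n - 1) + n)
        = (derivative z).coeff (n - 1) * p.coeff n :=
      coeff_mul_add_eq_of_natDegree_le hdz hpnat.le
    have h2' : (derivative z).coeff (n - 1) = (n : ℂ) * z.coeff n := by
      rw [Polynomial.coeff_derivative, show n - 1 + 1 = n by omega,
        Nat.cast_sub (by omega : 1 ≤ n)]
      push_cast
      ring
    rw [show 2 * n - 1 = (n - 1) + n by omega, h1, h2', hpc]
  rw [hlhs] at e2
  have : (n : ℂ) ≠ 0 := Nat.cast_ne_zero.mpr (by omega)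
  exact (mul_ne_zero (mul_ne_zero this hlz) han) e2
end
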